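/- arXiv:1111.4066 — 10 statements merged into one kernel-verified Lean document; each statement's English description precedes it below -/
import Mathlib

section
/- Let k ≥ 2 be an integer, t_1, …, t_k complex numbers with t_2 ≠ 0, and n ≥ 1. Then det(Q_{k,n}) = F_{k,n+1}(t). -/
open Finset

noncomputable def detH (m : ℕ) (a : ℕ → ℕ → ℂ) : ℂ :=
  Matrix.det (Matrix.of fun i j : Fin m => a (i.1 + 1) (j.1 + 1))

/-- Entry (r,s) (1-based) of the matrix `Q_{k,n}`:
`i^{|r-s|} * t_{r-s+1} / t_2^{r-s}` if `-1 ≤ r-s < k`, and `0` otherwise. -/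
noncomputable def qEntry (k : ℕ) (t : ℤ → ℂ) (r s : ℕ) : ℂ :=
  if -1 ≤ (r : ℤ) - s ∧ (r : ℤ) - s < k then
    Complex.I ^ ((r : ℤ) - s).natAbs * t ((r : ℤ) - s + 1) / t 2 ^ ((r : ℤ) - s)
  else 0

open Matrix

/-!
`Q_{k,n}` is a lower Hessenberg Toeplitz matrix: its entries depend only on `r - s` and vanish
for `r - s < -1`. Expanding along the first column, deleting row `j` leaves a block lower
triangular minor whose blocks are a triangular matrix with diagonal `i t_2` and a copy of
`Q_{k,n-j}`. The resulting coefficients `(-1)^j (i t_2)^j i^j t_{j+1} / t_2^j` collapse to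
`t_{j+1}`, so `det Q_{k,n}` obeys the recursion of `F_{k,n+1}`.
-/

section Toeplitz

variable {R : Type*} [CommRing R]

def toeplitzMatrix (a : ℤ → R) (n : ℕ) : Matrix (Fin n) (Fin n) R :=
  of fun i j => a ((i : ℤ) - j)

lemma det_toeplitzMatrix_of_lowerTriangular {b : ℤ → R} (hb : ∀ m < 0, b m = 0) (n : ℕ) :
    (toeplitzMatrix b n).det = b 0 ^ n := by
  rw [det_of_isLowerTriangular]
  · simp [toeplitzMatrix]
  · intro i j hij
    exact hb _ (by have : i < j := hij; omega)

lemma det_toeplitzMatrix_submatrix_succAbove_succ {a : ℤ → R} (ha : ∀ m < -1, a m = 0)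
    {n : ℕ} (i : Fin (n + 1)) :
    ((toeplitzMatrix a (n + 1)).submatrix i.succAbove Fin.succ).det
      = a (-1) ^ (i : ℕ) * (toeplitzMatrix a (n - i)).det := by
  let e : Fin i ⊕ Fin (n - i) ≃ Fin n := finSumFinEquiv.trans (finCongr (by omega))
  have hblocks : ((toeplitzMatrix a (n + 1)).submatrix i.succAbove Fin.succ).submatrix e e
      = fromBlocks (toeplitzMatrix (fun m => a (m - 1)) i) 0
          (of fun (r : Fin (n - i)) (s : Fin i) => a ((i : ℤ) + r - s))
          (toeplitzMatrix a (n - i)) := by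
    ext (r | r) (s | s) <;> simp [e, toeplitzMatrix, Fin.succAbove, Fin.lt_def]
    · ring_nf
    · exact ha _ (by omega)
  rw [← det_submatrix_equiv_self e, hblocks, det_fromBlocks_zero₁₂,
    det_toeplitzMatrix_of_lowerTriangular fun m hm => ha _ (by omega), zero_sub]

lemma det_toeplitzMatrix_succ {a : ℤ → R} (ha : ∀ m < -1, a m = 0) (n : ℕ) :
    (toeplitzMatrix a (n + 1)).det
      = ∑ m ∈ range (n + 1), (-a (-1)) ^ m * a m * (toeplitzMatrix a (n - m)).det := by
  rw [det_succ_column_zero, ← Fin.sum_univ_eq_sum_range]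
  refine sum_congr rfl fun i _ => ?_
  rw [det_toeplitzMatrix_submatrix_succAbove_succ ha, neg_pow]
  simp only [toeplitzMatrix, of_apply, Fin.val_zero, Nat.cast_zero, sub_zero]
  ring

lemma det_toeplitzMatrix_eq_of_recursion {a : ℤ → R} (ha : ∀ m < -1, a m = 0) {G : ℕ → R}
    (hG0 : G 0 = 1)
    (hG : ∀ n, G (n + 1) = ∑ m ∈ range (n + 1), (-a (-1)) ^ m * a m * G (n - m)) (n : ℕ) :
    (toeplitzMatrix a n).det = G n := by
  induction n using Nat.strong_induction_on with
  | _ n ih =>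
    rcases n with _ | n
    · simp [hG0]
    · rw [det_toeplitzMatrix_succ ha, hG]
      exact sum_congr rfl fun m hm => by rw [ih _ (by omega)]

lemma sum_Icc_one_eq_sum_range (k : ℕ) (g : ℤ → R) :
    ∑ j ∈ Icc (1 : ℤ) k, g j = ∑ m ∈ range k, g (m + 1) := by
  refine (sum_nbij' (fun m : ℕ => (m : ℤ) + 1) (fun j => (j - 1).toNat) ?_ ?_ ?_ ?_ ?_).symm <;>
    intro x hx <;> simp_all <;> omega

lemma linearRecurrence_succ_eq_sum_range {k : ℕ} {t F : ℤ → R}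
    (hFneg : ∀ n : ℤ, n < 1 → F n = 0)
    (hFrec : ∀ n : ℤ, 1 ≤ n → F (n + 1) = ∑ j ∈ Icc (1 : ℤ) k, t j * F (n + 1 - j))
    (n : ℕ) :
    F ((n + 1 : ℕ) + 1) =
      ∑ m ∈ range (n + 1), (if m < k then t (m + 1) else 0) * F ((n - m : ℕ) + 1) := by
  let f : ℕ → R := fun m => t (m + 1) * F ((n : ℤ) + 1 - m)
  have hvanish : ∀ m ∈ range k, m ∉ range (n + 1) ∩ range k → f m = 0 := by
    intro m hm hm'
    simp only [mem_inter, mem_range, not_and, not_lt] at hm hm'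
    simp only [f, hFneg _ (by omega : (n : ℤ) + 1 - m < 1), mul_zero]
  calc F ((n + 1 : ℕ) + 1) = ∑ m ∈ range k, f m := by
        rw [hFrec _ (by omega), sum_Icc_one_eq_sum_range]
        push_cast
        exact sum_congr rfl fun m _ => by simp only [f]; ring_nf
    _ = ∑ m ∈ range (n + 1) ∩ range k, f m := (sum_subset inter_subset_right hvanish).symm
    _ = _ := by
        rw [← sum_ite_mem]
        refine sum_congr rfl fun m hm => ?_
        rw [mem_range] at hm
        simp only [f, mem_range, ite_zero_mul, Nat.cast_sub (by omega : m ≤ n)]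
        ring_nf

end Toeplitz

noncomputable def qDiagonal (k : ℕ) (t : ℤ → ℂ) (m : ℤ) : ℂ :=
  if -1 ≤ m ∧ m < k then Complex.I ^ m.natAbs * t (m + 1) / t 2 ^ m else 0

lemma detH_qEntry (k : ℕ) (t : ℤ → ℂ) (n : ℕ) :
    detH n (qEntry k t) = (toeplitzMatrix (qDiagonal k t) n).det := by
  rw [detH]
  congr 1
  ext i j
  simp only [of_apply, qEntry, toeplitzMatrix, qDiagonal]
  push_cast
  ring_nf

lemma qDiagonal_of_lt_neg_one (k : ℕ) (t : ℤ → ℂ) (m : ℤ) (hm : m < -1) :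
    qDiagonal k t m = 0 :=
  if_neg (by omega)

lemma qDiagonal_coeff {k : ℕ} {t : ℤ → ℂ} (ht0 : t 0 = 1) (ht2 : t 2 ≠ 0) (m : ℕ) :
    (-qDiagonal k t (-1)) ^ m * qDiagonal k t m = if m < k then t (m + 1) else 0 := by
  have hsuper : qDiagonal k t (-1) = Complex.I * t 2 := by
    rw [qDiagonal, if_pos (by omega)]
    simp [ht0]
  rw [hsuper, qDiagonal]
  split_ifs with h₁ h₂ h₂
  · simp only [Int.natAbs_natCast, zpow_natCast]
    have hI : -(Complex.I * t 2) * Complex.I = t 2 := by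
      rw [neg_mul, mul_right_comm, Complex.I_mul_I]; ring
    field_simp
    rw [← mul_pow, hI]
    ring
  · omega
  · omega
  · simp

theorem det_Q_eq_genFibPoly_general (k : ℕ) (t : ℤ → ℂ) (ht0 : t 0 = 1) (ht2 : t 2 ≠ 0)
    (F : ℤ → ℂ) (hFneg : ∀ n : ℤ, n < 1 → F n = 0) (hF1 : F 1 = 1)
    (hFrec : ∀ n : ℤ, 1 ≤ n →
      F (n + 1) = ∑ j ∈ Finset.Icc (1 : ℤ) (k : ℤ), t j * F (n + 1 - j))
    (n : ℕ) :
    detH n (qEntry k t) = F ((n : ℤ) + 1) := by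
  rw [detH_qEntry]
  refine det_toeplitzMatrix_eq_of_recursion (qDiagonal_of_lt_neg_one k t)
    (G := fun n : ℕ => F ((n : ℤ) + 1)) (by simpa using hF1) (fun n => ?_) n
  simp only [qDiagonal_coeff ht0 ht2]
  exact linearRecurrence_succ_eq_sum_range hFneg hFrec n

theorem det_Q_eq_genFibPoly (k : ℕ) (hk : 2 ≤ k) (t : ℤ → ℂ) (ht0 : t 0 = 1) (ht2 : t 2 ≠ 0)
    (F : ℤ → ℂ) (hFneg : ∀ n : ℤ, n < 1 → F n = 0) (hF1 : F 1 = 1)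
    (hFrec : ∀ n : ℤ, 1 ≤ n →
      F (n + 1) = ∑ j ∈ Finset.Icc (1 : ℤ) (k : ℤ), t j * F (n + 1 - j))
    (n : ℕ) (hn : 1 ≤ n) :
    detH n (qEntry k t) = F ((n : ℤ) + 1) :=
  det_Q_eq_genFibPoly_general k t ht0 ht2 F hFneg hF1 hFrec n
end

section
/- Let k ≥ 2 be an integer and n ≥ 1, and let C_{k,n} = (c_{rs}) be the n×n complex matrix with c_{rs} = i^{|r−s|} if −1 ≤ r−s < k and c_{rs} = 0 otherwise (1 ≤ r,s ≤ n), where i = √−1. Then det(C_{k,n}) = f_{k,k+n−1}. -/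
open Finset

/-- Entry (r,s) (1-based) of the matrix `C_{k,n}`:
`i^{|r-s|}` if `-1 ≤ r-s < k`, and `0` otherwise. -/
noncomputable def cEntry (k : ℕ) (r s : ℕ) : ℂ :=
  if -1 ≤ (r : ℤ) - s ∧ (r : ℤ) - s < k then
    Complex.I ^ ((r : ℤ) - s).natAbs
  else 0

/-!
`C_{k,n}` is the lower Hessenberg Toeplitz matrix `(t (r - s))` with `t (-1) = i` and
`t j = i ^ j` for `0 ≤ j < k`. Expand its determinant `D n` along the first column: deleting row
`j + 1` and the first column leaves a block lower triangular matrix, a `j × j` triangle with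
diagonal `t (-1)` followed by a copy of `C_{k, n-1-j}`. Hence
`D n = ∑ j, (-t (-1)) ^ j * t j * D (n - 1 - j)`, and since `(-i) ^ j * i ^ j = 1` this is
`D n = ∑_{j < min k n} D (n - 1 - j)`, the order-`k` Fibonacci recursion (the zeros
`f 1 = ⋯ = f (k - 2)` account for the truncation at `n`).
-/

namespace Matrix

variable {R : Type*}

def toeplitz (t : ℤ → R) (n : ℕ) : Matrix (Fin n) (Fin n) R :=
  of fun i j => t ((i : ℕ) - (j : ℕ))

variable (t : ℤ → R)

@[simp]
lemma toeplitz_apply {n : ℕ} (i j : Fin n) : toeplitz t n i j = t ((i : ℕ) - (j : ℕ)) := rfl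

lemma toeplitz_submatrix_succ_succ (n : ℕ) :
    (toeplitz t (n + 1)).submatrix Fin.succ Fin.succ = toeplitz t n := by
  ext i j
  simp only [submatrix_apply, toeplitz_apply, Fin.val_succ]
  congr 1
  push_cast
  ring

variable [CommRing R] {t}

lemma det_toeplitz_submatrix_succAbove_succ (ht : ∀ j ≤ -2, t j = 0) {n : ℕ} (i : Fin (n + 1)) :
    ((toeplitz t (n + 1)).submatrix i.succAbove Fin.succ).det =
      t (-1) ^ (i : ℕ) * (toeplitz t (n - i)).det := by
  induction n with
  | zero =>
    rw [Fin.fin_one_eq_zero i, Fin.succAbove_zero, toeplitz_submatrix_succ_succ, Fin.val_zero,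
      pow_zero, one_mul]
  | succ m ih =>
    induction i using Fin.cases with
    | zero =>
      rw [Fin.succAbove_zero, toeplitz_submatrix_succ_succ, Fin.val_zero, pow_zero, one_mul,
        Nat.sub_zero]
    | succ i =>
      set A := (toeplitz t (m + 2)).submatrix i.succ.succAbove Fin.succ
      have hrow : ∀ j : Fin (m + 1), A 0 j = if j = 0 then t (-1) else 0 := by
        intro j
        simp only [A, submatrix_apply, Fin.succ_succAbove_zero, toeplitz_apply, Fin.val_zero,
          Fin.val_succ]
        split_ifs with hj
        · simp [hj]
        · have : (j : ℕ) ≠ 0 := fun h => hj (Fin.ext h)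
          exact ht _ (by omega)
      have hminor :
          A.submatrix Fin.succ Fin.succ = (toeplitz t (m + 1)).submatrix i.succAbove Fin.succ := by
        ext a b
        simp only [A, submatrix_apply, Fin.succ_succAbove_succ,
          ← toeplitz_submatrix_succ_succ t (m + 1)]
      rw [det_succ_row_zero, Fintype.sum_eq_single 0 fun j hj => by simp [hrow, hj],
        hrow, if_pos rfl, Fin.succAbove_zero, hminor, ih, Fin.val_succ, Fin.val_zero,
        Nat.add_sub_add_right]
      ring

lemma det_toeplitz_succ (ht : ∀ j ≤ -2, t j = 0) (n : ℕ) :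
    (toeplitz t (n + 1)).det =
      ∑ i ∈ range (n + 1), (-t (-1)) ^ i * t i * (toeplitz t (n - i)).det := by
  rw [det_succ_column_zero, ← Fin.sum_univ_eq_sum_range
    (fun i => (-t (-1)) ^ i * t i * (toeplitz t (n - i)).det)]
  refine sum_congr rfl fun i _ => ?_
  rw [det_toeplitz_submatrix_succAbove_succ ht, toeplitz_apply, Fin.val_zero]
  push_cast
  rw [sub_zero, neg_pow]
  ring

end Matrix

open Matrix

noncomputable def cSymbol (k : ℕ) (j : ℤ) : ℂ :=
  if -1 ≤ j ∧ j < k then Complex.I ^ j.natAbs else 0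

lemma detH_cEntry (k n : ℕ) : detH n (cEntry k) = (toeplitz (cSymbol k) n).det := by
  unfold detH
  congr 1
  ext i j
  simp only [of_apply, toeplitz_apply, cEntry, cSymbol]
  push_cast
  rw [add_sub_add_right_eq_sub]

lemma neg_cSymbol_neg_one_pow_mul (k i : ℕ) :
    (-cSymbol k (-1)) ^ i * cSymbol k i = if i < k then 1 else 0 := by
  have hsuper : cSymbol k (-1) = Complex.I := by
    rw [cSymbol, if_pos ⟨le_rfl, by omega⟩, Int.natAbs_neg, Int.natAbs_one, pow_one]
  by_cases hik : i < k
  · have hdiag : cSymbol k i = Complex.I ^ i := if_pos ⟨by omega, by exact_mod_cast hik⟩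
    rw [hsuper, hdiag, if_pos hik, ← mul_pow, neg_mul, Complex.I_mul_I, neg_neg, one_pow]
  · have hdiag : cSymbol k i = 0 := if_neg (by omega)
    rw [hdiag, if_neg hik, mul_zero]

lemma detH_cEntry_succ (k n : ℕ) :
    detH (n + 1) (cEntry k) = ∑ i ∈ range (min k (n + 1)), detH (n - i) (cEntry k) := by
  have hlower : ∀ j ≤ -2, cSymbol k j = 0 := fun j hj => if_neg (by omega)
  simp only [detH_cEntry, det_toeplitz_succ hlower, neg_cSymbol_neg_one_pow_mul, ite_mul,
    one_mul, zero_mul, ← sum_filter]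
  congr 1
  ext i
  simp [and_comm]

lemma genFib_eq_sum_range_min {M : Type*} [AddCommMonoid M] {k : ℕ} (hk : 1 ≤ k) {f : ℤ → M}
    (hf0 : ∀ n : ℤ, 1 ≤ n → n ≤ (k : ℤ) - 2 → f n = 0) (hfk : f k = f (k - 1))
    (hfrec : ∀ n : ℤ, (k : ℤ) < n → f n = ∑ j ∈ Icc (1 : ℤ) k, f (n - j)) (m : ℕ) :
    f (k + m) = ∑ i ∈ range (min k (m + 1)), f (k + (m - i : ℕ) - 1) := by
  rcases Nat.eq_zero_or_pos m with rfl | hm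
  · rw [min_eq_right hk, sum_range_one]
    simpa using hfk
  have hshift : ∑ j ∈ Icc (1 : ℤ) k, f (k + m - j) = ∑ i ∈ range k, f (k + m - 1 - i) :=
    sum_nbij' (fun j => (j - 1).toNat) (fun i => (i : ℤ) + 1)
      (by intro j hj; simp only [mem_Icc, mem_range] at hj ⊢; omega)
      (by intro i hi; simp only [mem_Icc, mem_range] at hi ⊢; omega)
      (by intro j hj; simp only [mem_Icc] at hj; omega)
      (by intro i _; simp)
      (by intro j hj; simp only [mem_Icc] at hj; congr 1; omega)
  rw [hfrec _ (by omega), hshift, ← sum_subset (range_subset_range.mpr (min_le_left k (m + 1)))]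
  · refine sum_congr rfl fun i hi => ?_
    rw [mem_range, lt_min_iff] at hi
    congr 1
    omega
  · intro i hik him
    rw [mem_range] at hik him
    exact hf0 _ (by omega) (by omega)

theorem det_C_eq_genFib_general (k : ℕ) (hk : 2 ≤ k)
    (f : ℤ → ℂ) (hf0 : ∀ n : ℤ, 1 ≤ n → n ≤ (k : ℤ) - 2 → f n = 0)
    (hfk1 : f ((k : ℤ) - 1) = 1) (hfk : f (k : ℤ) = 1)
    (hfrec : ∀ n : ℤ, (k : ℤ) < n → f n = ∑ j ∈ Finset.Icc (1 : ℤ) (k : ℤ), f (n - j))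
    (n : ℕ) :
    detH n (cEntry k) = f ((k : ℤ) + n - 1) := by
  induction n using Nat.strong_induction_on with
  | _ n ih =>
    cases n with
    | zero => simp [detH, hfk1]
    | succ m =>
      rw [detH_cEntry_succ, show (k : ℤ) + (m + 1 : ℕ) - 1 = k + m by push_cast; ring,
        genFib_eq_sum_range_min (by omega) hf0 (hfk.trans hfk1.symm) hfrec]
      exact sum_congr rfl fun i _ => ih _ (by omega)

theorem det_C_eq_genFib (k : ℕ) (hk : 2 ≤ k)
    (f : ℤ → ℂ) (hf0 : ∀ n : ℤ, 1 ≤ n → n ≤ (k : ℤ) - 2 → f n = 0)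
    (hfk1 : f ((k : ℤ) - 1) = 1) (hfk : f (k : ℤ) = 1)
    (hfrec : ∀ n : ℤ, (k : ℤ) < n → f n = ∑ j ∈ Finset.Icc (1 : ℤ) (k : ℤ), f (n - j))
    (n : ℕ) (hn : 1 ≤ n) :
    detH n (cEntry k) = f ((k : ℤ) + n - 1) :=
  det_C_eq_genFib_general k hk f hf0 hfk1 hfk hfrec n
end

section
/- Let k ≥ 2 be an integer and n ≥ 1, and let M_{k,n} = (m_{ij}) be the n×n matrix with m_{ij} = −1 if j = i+1, m_{ij} = 1 if 0 ≤ i−j < k, and m_{ij} = 0 otherwise (1 ≤ i,j ≤ n). Then det(M_{k,n}) = f_{k,k+n−1}. -/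
/-!
`M_{k,n}` is lower Hessenberg with `-1` on the superdiagonal. Expanding its determinant `D_n`
along the last row, each minor is block lower triangular: the leading block gives `D_j`, the
other block is triangular with diagonal `-1`, and its sign cancels the cofactor sign. Hence
`D_{m+1} = ∑_{j ≤ m} m_{m+1,j+1} D_j`, and since `m_{m+1,j+1} = 1` exactly for the last `k`
indices `j`, `D` is the sum of its previous `k` terms with `D_0 = 1`, like `n ↦ f_{k,k+n-1}`.
-/

open Finset

/-- Entry (i,j) (1-based) of the matrix `M_{k,n}`:
`-1` if `j = i+1`, `1` if `0 ≤ i-j < k`, and `0` otherwise. -/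
noncomputable def mEntry (k : ℕ) (i j : ℕ) : ℂ :=
  if j = i + 1 then -1
  else if 0 ≤ (i : ℤ) - j ∧ (i : ℤ) - j < k then 1
  else 0

open Matrix

theorem Fin.val_succAbove_eq_ite {m : ℕ} (j : Fin (m + 1)) (c : Fin m) :
    (j.succAbove c : ℕ) = if (c : ℕ) < j then (c : ℕ) else (c : ℕ) + 1 := by
  unfold Fin.succAbove
  split_ifs <;> simp_all [Fin.lt_def]

section Hessenberg

variable {R : Type*} [CommRing R] {a : ℕ → ℕ → R}

-- The left-hand matrix is the minor of `(a i c)_{i, c ≤ m}` without row `m` and column `j`.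
theorem det_hessenberg_minor (hsup : ∀ i, a i (i + 1) = -1)
    (habove : ∀ i j, i + 1 < j → a i j = 0) {j m : ℕ} (hj : j ≤ m) :
    det (of fun i c : Fin m => a i (if (c : ℕ) < j then c else c + 1)) =
      (-1) ^ (m - j) * det (of fun i c : Fin j => a i c) := by
  obtain ⟨d, rfl⟩ := Nat.exists_eq_add_of_le hj
  rw [Nat.add_sub_cancel_left]
  clear hj
  induction d with
  | zero =>
    show det (of fun i c : Fin j => _) = _
    simp
  | succ d ih =>
    show det (of fun i c : Fin (j + d + 1) => _) = _
    rw [det_succ_column _ (Fin.last (j + d)), sum_eq_single (Fin.last (j + d))]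
    · have hsub :
          (of fun i c : Fin (j + d + 1) => a i (if (c : ℕ) < j then c else c + 1)).submatrix
            Fin.castSucc Fin.castSucc =
          of fun i c : Fin (j + d) => a i (if (c : ℕ) < j then c else c + 1) := by
        ext i c
        simp
      rw [Fin.succAbove_last, hsub, ih]
      simp [hsup, pow_succ]
    · intro i _ hi
      have : (i : ℕ) < j + d := Fin.val_lt_last hi
      simp [habove i (j + d + 1) (by omega)]
    · simp

theorem det_succ_of_hessenberg (hsup : ∀ i, a i (i + 1) = -1)
    (habove : ∀ i j, i + 1 < j → a i j = 0) (m : ℕ) :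
    det (of fun i j : Fin (m + 1) => a i j) =
      ∑ j ∈ range (m + 1), a m j * det (of fun i c : Fin j => a i c) := by
  rw [det_succ_row _ (Fin.last m), ← Fin.sum_univ_eq_sum_range]
  refine sum_congr rfl fun j _ => ?_
  have hminor : (of fun i j : Fin (m + 1) => a i j).submatrix (Fin.last m).succAbove j.succAbove =
      of fun i c : Fin m => a i (if (c : ℕ) < j then c else c + 1) := by
    ext i c
    simp [Fin.val_succAbove_eq_ite]
  have hsign : (-1 : R) ^ (m + j : ℕ) * (-1) ^ (m - j) = 1 := by
    rw [← pow_add, show m + j + (m - j) = 2 * m by omega, pow_mul, neg_one_sq, one_pow]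
  rw [hminor, det_hessenberg_minor hsup habove (Nat.lt_succ_iff.mp j.isLt), of_apply, Fin.val_last]
  linear_combination (a m j * det (of fun i c : Fin j => a i c)) * hsign

end Hessenberg

theorem mEntry_self_succ (k i : ℕ) : mEntry k i (i + 1) = -1 := if_pos rfl

theorem mEntry_of_succ_lt {k i j : ℕ} (h : i + 1 < j) : mEntry k i j = 0 := by
  rw [mEntry, if_neg (by omega), if_neg (by omega)]

theorem mEntry_of_le {k i j : ℕ} (h : j ≤ i) : mEntry k i j = if i - j < k then 1 else 0 := by
  rw [mEntry, if_neg (by omega)]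
  congr 1
  apply propext
  omega

-- `m + 1 - k` truncates at `0`: a term with fewer than `k` predecessors is the sum of all of them.
def IsSumOfPrevious {M : Type*} [AddCommMonoid M] (k : ℕ) (u : ℕ → M) : Prop :=
  ∀ m, u (m + 1) = ∑ j ∈ Ico (m + 1 - k) (m + 1), u j

theorem IsSumOfPrevious.eq {M : Type*} [AddCommMonoid M] {k : ℕ} {u v : ℕ → M}
    (hu : IsSumOfPrevious k u) (hv : IsSumOfPrevious k v) (h0 : u 0 = v 0) : u = v := by
  funext n
  induction n using Nat.strong_induction_on with
  | _ n ih =>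
    cases n with
    | zero => exact h0
    | succ m =>
      rw [hu m, hv m]
      exact sum_congr rfl fun j hj => ih j (by simp only [mem_Ico] at hj; omega)

theorem isSumOfPrevious_detH_mEntry (k : ℕ) : IsSumOfPrevious k fun n => detH n (mEntry k) := by
  intro m
  have hfilter : (range (m + 1)).filter (fun j => m - j < k) = Ico (m + 1 - k) (m + 1) := by
    ext j
    simp only [mem_filter, mem_range, mem_Ico]
    omega
  show detH (m + 1) (mEntry k) = ∑ j ∈ Ico (m + 1 - k) (m + 1), detH j (mEntry k)
  rw [detH, det_succ_of_hessenberg (a := fun i j => mEntry k (i + 1) (j + 1))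
    (fun i => mEntry_self_succ k (i + 1)) (fun i j h => mEntry_of_succ_lt (by omega)),
    ← hfilter, sum_filter]
  refine sum_congr rfl fun j hj => ?_
  rw [mEntry_of_le (by simp at hj; omega), Nat.add_sub_add_right]
  split_ifs <;> simp [detH]

theorem isSumOfPrevious_genFib_shift {M : Type*} [AddCommMonoid M] {k : ℕ} (hk : 0 < k)
    {f : ℤ → M} (hf0 : ∀ n : ℤ, 1 ≤ n → n ≤ (k : ℤ) - 2 → f n = 0) (hfk : f k = f (k - 1))
    (hfrec : ∀ n : ℤ, (k : ℤ) < n → f n = ∑ j ∈ Icc (1 : ℤ) k, f (n - j)) :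
    IsSumOfPrevious k fun n : ℕ => f (k + n - 1) := by
  intro m
  rcases m with _ | m
  · have hsingle : Ico (0 + 1 - k) (0 + 1) = {0} := by
      ext j
      simp only [mem_Ico, mem_singleton]
      omega
    simpa [hsingle] using hfk
  · beta_reduce
    rw [hfrec _ (by omega)]
    calc ∑ i ∈ Icc (1 : ℤ) k, f (k + ↑(m + 1 + 1) - 1 - i)
        = ∑ i ∈ Icc (1 : ℤ) (min k (m + 2)), f (k + ↑(m + 1 + 1) - 1 - i) := by
          refine (sum_subset (Icc_subset_Icc le_rfl (min_le_left _ _)) fun i hi hni => ?_).symm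
          simp only [mem_Icc] at hi hni
          exact hf0 _ (by omega) (by omega)
      _ = ∑ j ∈ Ico (m + 1 + 1 - k) (m + 1 + 1), f (k + ↑j - 1) := by
          refine sum_nbij' (fun i => (m + 2 - i).toNat) (fun j => m + 2 - j) ?_ ?_ ?_ ?_ ?_ <;>
            intro i hi <;> simp only [mem_Icc, mem_Ico] at hi ⊢
          all_goals first | omega | (congr 1; omega)

theorem det_M_eq_genFib_general (k : ℕ) (hk : 2 ≤ k)
    (f : ℤ → ℂ) (hf0 : ∀ n : ℤ, 1 ≤ n → n ≤ (k : ℤ) - 2 → f n = 0)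
    (hfk1 : f ((k : ℤ) - 1) = 1) (hfk : f (k : ℤ) = 1)
    (hfrec : ∀ n : ℤ, (k : ℤ) < n → f n = ∑ j ∈ Finset.Icc (1 : ℤ) (k : ℤ), f (n - j))
    (n : ℕ) :
    detH n (mEntry k) = f ((k : ℤ) + n - 1) := by
  have hbase : detH 0 (mEntry k) = f (k + (0 : ℕ) - 1) := by
    rw [detH, det_fin_zero, Nat.cast_zero, add_zero, hfk1]
  have hshift := isSumOfPrevious_genFib_shift (by omega) hf0 (hfk.trans hfk1.symm) hfrec
  exact congrFun ((isSumOfPrevious_detH_mEntry k).eq hshift hbase) n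

theorem det_M_eq_genFib (k : ℕ) (hk : 2 ≤ k)
    (f : ℤ → ℂ) (hf0 : ∀ n : ℤ, 1 ≤ n → n ≤ (k : ℤ) - 2 → f n = 0)
    (hfk1 : f ((k : ℤ) - 1) = 1) (hfk : f (k : ℤ) = 1)
    (hfrec : ∀ n : ℤ, (k : ℤ) < n → f n = ∑ j ∈ Finset.Icc (1 : ℤ) (k : ℤ), f (n - j))
    (n : ℕ) (hn : 1 ≤ n) :
    detH n (mEntry k) = f ((k : ℤ) + n - 1) :=
  det_M_eq_genFib_general k hk f hf0 hfk1 hfk hfrec n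
end

section
/- Let k ≥ 2 be an integer, c_1, …, c_k complex numbers with c_2 ≠ 0, and n ≥ 1. If Q_{k,n} is formed with t_j = c_j for 1 ≤ j ≤ k, then det(Q_{k,n}) = f^1_{k,n}. -/
/-!
Write `β = i / t₂`. Conjugating by `diag(β, β², …, βⁿ)` turns `Q_{k,n}` into the lower Hessenberg
matrix `M` with `c_{r-s+1}` in the band `0 ≤ r - s < k` and `-1` on the superdiagonal, so
`det Q_{k,n} = det M`. The recurrence says exactly that `M (f_0, …, f_{n-1})ᵀ = f_n eₙ`; by Cramer's
rule `det M · f_0` is the determinant of `M` with its first column replaced by `f_n eₙ`, and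
expanding along that column leaves a triangular minor with diagonal `-1`.
-/

open Finset

open Matrix

namespace Matrix

theorem det_of_mul_mul_inv {K n : Type*} [Field K] [Fintype n] [DecidableEq n]
    (A : Matrix n n K) (u : n → K) (hu : ∀ i, u i ≠ 0) :
    det (of fun i j => u i * A i j * (u j)⁻¹) = det A := by
  have hprod : (∏ i, u i) * ∏ i, (u i)⁻¹ = 1 := by
    rw [prod_inv_distrib, mul_inv_cancel₀ (prod_ne_zero_iff.2 fun i _ => hu i)]
  calc det (of fun i j => u i * A i j * (u j)⁻¹)
      = det (of fun i j => u i * (of fun i j => (u j)⁻¹ * A i j) i j) := by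
        congr 1; ext i j; simp only [of_apply]; ring
    _ = det A := by rw [det_mul_column, det_mul_row, ← mul_assoc, hprod, one_mul]

variable {R : Type*} [CommRing R] {m : ℕ}

theorem det_updateCol_zero_single_last (M : Matrix (Fin (m + 1)) (Fin (m + 1)) R)
    (hM : ∀ i j : Fin (m + 1), i.1 + 1 < j.1 → M i j = 0) :
    (M.updateCol 0 (Pi.single (Fin.last m) 1)).det
      = (-1) ^ m * ∏ i : Fin m, M i.castSucc i.succ := by
  rw [det_succ_column_zero, sum_eq_single (Fin.last m) (fun i _ hi => by simp [hi]) (by simp)]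
  have htri : (M.submatrix Fin.castSucc Fin.succ).IsLowerTriangular := fun i j hij =>
    hM _ _ (by simpa using hij)
  simp only [updateCol_self, Pi.single_eq_same, Fin.val_last, mul_one, Fin.succAbove_last]
  have hsub : (M.updateCol 0 (Pi.single (Fin.last m) 1)).submatrix Fin.castSucc Fin.succ
      = M.submatrix Fin.castSucc Fin.succ := by
    ext i j; simp
  rw [hsub, det_of_isLowerTriangular _ htri]
  rfl

theorem det_mul_eq_of_mulVec_eq_single_last (M : Matrix (Fin (m + 1)) (Fin (m + 1)) R)
    (hM : ∀ i j : Fin (m + 1), i.1 + 1 < j.1 → M i j = 0) {x : Fin (m + 1) → R} {v : R}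
    (hx : M *ᵥ x = Pi.single (Fin.last m) v) :
    M.det * x 0 = (-1) ^ m * v * ∏ i : Fin m, M i.castSucc i.succ := by
  calc M.det * x 0 = cramer M (M *ᵥ x) 0 := by
        rw [cramer_eq_adjugate_mulVec, mulVec_mulVec, adjugate_mul, smul_mulVec, one_mulVec,
          Pi.smul_apply, smul_eq_mul]
    _ = (M.updateCol 0 (v • Pi.single (Fin.last m) 1)).det := by
        rw [cramer_apply, hx, ← Pi.single_smul', smul_eq_mul, mul_one]
    _ = (-1) ^ m * v * ∏ i : Fin m, M i.castSucc i.succ := by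
        rw [det_updateCol_smul, det_updateCol_zero_single_last M hM]; ring

end Matrix

def fibHessenbergEntry (k : ℕ) (c : ℤ → ℂ) (r s : ℕ) : ℂ :=
  (if s ≤ r ∧ r < s + k then c ((r : ℤ) - s + 1) else 0) - if r + 1 = s then 1 else 0

theorem fibHessenbergEntry_of_succ_lt {k : ℕ} {c : ℤ → ℂ} {r s : ℕ} (h : r + 1 < s) :
    fibHessenbergEntry k c r s = 0 := by
  rw [fibHessenbergEntry, if_neg (by omega), if_neg (by omega), sub_zero]

theorem fibHessenbergEntry_succ {k : ℕ} {c : ℤ → ℂ} (r : ℕ) :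
    fibHessenbergEntry k c r (r + 1) = -1 := by
  rw [fibHessenbergEntry, if_neg (by omega), if_pos rfl, zero_sub]

theorem qEntry_eq_mul_fibHessenbergEntry {k : ℕ} {t c : ℤ → ℂ} (ht0 : t 0 = 1)
    (htc : ∀ j : ℤ, 1 ≤ j → j ≤ k → t j = c j) (ht2 : t 2 ≠ 0) (r s : ℕ) :
    qEntry k t r s
      = (Complex.I / t 2) ^ r * fibHessenbergEntry k c r s * ((Complex.I / t 2) ^ s)⁻¹ := by
  have hβ : Complex.I / t 2 ≠ 0 := div_ne_zero Complex.I_ne_zero ht2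
  by_cases hband : s ≤ r ∧ r < s + k
  · obtain ⟨e, rfl⟩ := Nat.exists_eq_add_of_le hband.1
    have hd : ((s + e : ℕ) : ℤ) - s = e := by push_cast; ring
    rw [qEntry, hd, if_pos (by omega), fibHessenbergEntry, if_pos hband, if_neg (by omega), hd,
      htc _ (by omega) (by omega)]
    rw [Int.natAbs_natCast, zpow_natCast, sub_zero, pow_add, div_pow, div_pow]
    field_simp
  by_cases hsup : r + 1 = s
  · subst hsup
    have hd : (r : ℤ) - ((r + 1 : ℕ) : ℤ) = -1 := by push_cast; ring
    rw [qEntry, hd, if_pos (by omega), fibHessenbergEntry, if_neg hband, if_pos rfl]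
    norm_num [ht0, pow_succ]
    field_simp
  · rw [qEntry, if_neg (by omega), fibHessenbergEntry, if_neg hband, if_neg hsup]
    ring

section Recurrence

variable {k : ℕ} {c f : ℤ → ℂ}
  (hf_neg : ∀ n : ℤ, 1 - (k : ℤ) ≤ n → n < 0 → f n = 0)
  (hf_rec : ∀ n : ℤ, 0 < n → f n = ∑ j ∈ Icc (1 : ℤ) k, c j * f (n - j))
include hf_neg hf_rec

theorem sum_range_band_mul_eq {r N : ℕ} (hr : 0 < r) (hrN : r ≤ N) :
    ∑ s ∈ range N, (if s < r ∧ r ≤ s + k then c (r - s) else 0) * f s = f r := by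
  rw [hf_rec r (by exact_mod_cast hr)]
  -- `s ↦ r - s`; the terms with `r < j` on the right vanish since `f` is zero on `[1 - k, 0)`.
  refine sum_bij_ne_zero (fun s _ _ => (r : ℤ) - s) ?_ ?_ ?_ ?_
  · intro s _ hs
    have hband : s < r ∧ r ≤ s + k := by by_contra h; simp [h] at hs
    simp only [mem_Icc]; omega
  · intro s₁ _ _ s₂ _ _ h; omega
  · intro l hl hl0
    simp only [mem_Icc] at hl
    have hrl : 0 ≤ (r : ℤ) - l := by
      by_contra h
      exact hl0 (by rw [hf_neg _ (by omega) (by omega), mul_zero])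
    refine ⟨((r : ℤ) - l).toNat, mem_range.2 (by omega), ?_, by omega⟩
    rw [if_pos (by omega)]
    rwa [Int.toNat_of_nonneg hrl, sub_sub_cancel]
  · intro s _ hs
    have h : s < r ∧ r ≤ s + k := by by_contra h; simp [h] at hs
    rw [if_pos h, sub_sub_cancel]

theorem sum_range_fibHessenbergEntry_mul {r N : ℕ} (hr : 0 < r) (hrN : r ≤ N) :
    ∑ s ∈ range N, fibHessenbergEntry k c r (s + 1) * f s = if r = N then f r else 0 := by
  have hentry : ∀ s, fibHessenbergEntry k c r (s + 1)
      = (if s < r ∧ r ≤ s + k then c (r - s) else 0) - if r = s then 1 else 0 := by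
    intro s
    simp only [fibHessenbergEntry, Nat.add_right_cancel_iff, Nat.cast_add, Nat.cast_one,
      sub_add_eq_sub_sub, sub_add_cancel]
    congr 2
    exact propext (by omega)
  simp only [hentry, sub_mul, sum_sub_distrib]
  rw [sum_range_band_mul_eq hf_neg hf_rec hr hrN]
  simp only [ite_mul, one_mul, zero_mul, sum_ite_eq, mem_range]
  rcases hrN.lt_or_eq with hlt | rfl
  · simp [hlt, hlt.ne]
  · simp

theorem fibHessenbergEntry_mulVec (m : ℕ) :
    (of fun i j : Fin (m + 1) => fibHessenbergEntry k c (i + 1) (j + 1)) *ᵥ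
      (fun j => f j) = Pi.single (Fin.last m) (f (m + 1)) := by
  ext i
  rw [mulVec, dotProduct]
  simp only [of_apply]
  rw [Fin.sum_univ_eq_sum_range (fun j => fibHessenbergEntry k c (i + 1) (j + 1) * f j),
    sum_range_fibHessenbergEntry_mul hf_neg hf_rec (by omega) (by omega)]
  simp only [Pi.single_apply, Fin.ext_iff, Fin.val_last, Nat.add_right_cancel_iff]
  split_ifs with h <;> simp [h]

theorem detH_fibHessenbergEntry (hf_zero : f 0 = 1) (m : ℕ) :
    detH (m + 1) (fibHessenbergEntry k c) = f (m + 1) := by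
  have h := det_mul_eq_of_mulVec_eq_single_last
    (of fun i j : Fin (m + 1) => fibHessenbergEntry k c (i + 1) (j + 1))
    (fun i j hij => fibHessenbergEntry_of_succ_lt (by simpa using hij))
    (fibHessenbergEntry_mulVec hf_neg hf_rec m)
  simp only [of_apply, Fin.val_castSucc, Fin.val_succ, fibHessenbergEntry_succ, prod_const,
    card_univ, Fintype.card_fin, Fin.val_zero, Nat.cast_zero, hf_zero, mul_one] at h
  rw [detH, h, mul_right_comm, ← mul_pow, neg_one_mul, neg_neg, one_pow, one_mul]

end Recurrence

theorem det_Q_eq_kSOkF (k : ℕ) (hk : 2 ≤ k) (c : ℤ → ℂ) (hc2 : c 2 ≠ 0)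
    (t : ℤ → ℂ) (ht0 : t 0 = 1) (htc : ∀ j : ℤ, 1 ≤ j → j ≤ (k : ℤ) → t j = c j)
    (f₁ : ℤ → ℂ) (hf₁zero : f₁ 0 = 1)
    (hf₁neg : ∀ n : ℤ, 1 - (k : ℤ) ≤ n → n < 0 → f₁ n = 0)
    (hf₁rec : ∀ n : ℤ, 0 < n →
      f₁ n = ∑ j ∈ Finset.Icc (1 : ℤ) (k : ℤ), c j * f₁ (n - j))
    (n : ℕ) (hn : 1 ≤ n) :
    detH n (qEntry k t) = f₁ (n : ℤ) := by
  obtain ⟨m, rfl⟩ := Nat.exists_eq_add_of_le' hn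
  have ht2 : t 2 ≠ 0 := by rwa [htc 2 (by norm_num) (by exact_mod_cast hk)]
  have hβ : Complex.I / t 2 ≠ 0 := div_ne_zero Complex.I_ne_zero ht2
  calc detH (m + 1) (qEntry k t) = detH (m + 1) (fibHessenbergEntry k c) := by
        simp only [detH, qEntry_eq_mul_fibHessenbergEntry ht0 htc ht2]
        exact det_of_mul_mul_inv
          (of fun i j : Fin (m + 1) => fibHessenbergEntry k c (i + 1) (j + 1))
          (fun i => (Complex.I / t 2) ^ (i.1 + 1)) fun _ => pow_ne_zero _ hβ
    _ = f₁ (m + 1 : ℕ) := by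
        push_cast
        exact detH_fibHessenbergEntry hf₁neg hf₁rec hf₁zero m
end

section
/- Let k ≥ 2 be an integer, c_1, …, c_k complex numbers with c_2 ≠ 0, and n ≥ 1. If B_{k,n} is formed with t_j = c_j for 1 ≤ j ≤ k, then det(B_{k,n}) = f^1_{k,n}. -/
/-!
`B_{k,n}` is a lower Hessenberg matrix with constant superdiagonal `-t₂` and Toeplitz lower
part `a_r = t_{r+1} / t₂^r` (for `r < k`, zero beyond). Expanding such a determinant along the
first row gives `det B_{n+1} = ∑_{r ≤ n} t₂^r a_r det B_{n-r}`, and `t₂^r a_r = c_{r+1}` because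
`t₂ ≠ 0`. Since `f¹_{k,m} = 0` for `1-k ≤ m < 0`, this is exactly the recurrence of
`f¹_{k,·}`, and both sequences start from `1` at `n = 0`.
-/

open Finset

/-- Entry (i,j) (1-based) of the matrix `B_{k,n}`:
`-t_2` if `j = i+1`, `t_{i-j+1} / t_2^{i-j}` if `0 ≤ i-j < k`, and `0` otherwise. -/
noncomputable def bEntry (k : ℕ) (t : ℤ → ℂ) (i j : ℕ) : ℂ :=
  if j = i + 1 then -t 2
  else if 0 ≤ (i : ℤ) - j ∧ (i : ℤ) - j < k then
    t ((i : ℤ) - j + 1) / t 2 ^ ((i : ℤ) - j)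
  else 0

section

variable {R : Type*} [CommRing R]

def hessenbergToeplitz (s : R) (a : ℕ → R) (n : ℕ) : Matrix (Fin n) (Fin n) R :=
  Matrix.of fun i j => if (j : ℕ) = i + 1 then -s else if (j : ℕ) ≤ i then a (i - j) else 0

namespace hessenbergToeplitz

variable (s : R) (a : ℕ → R)

/- With an arbitrary first column the expansion along row zero closes up: the only other
nonzero term is `s` times a minor of the same shape, with `b` shifted by one. -/
theorem det_updateCol_zero_succ (b : ℕ → R) (n : ℕ) :
    ((hessenbergToeplitz s a (n + 2)).updateCol 0 fun i => b i).det =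
      b 0 * (hessenbergToeplitz s a (n + 1)).det +
        s * ((hessenbergToeplitz s a (n + 1)).updateCol 0 fun i => b (i + 1)).det := by
  have minor_zero : ((hessenbergToeplitz s a (n + 2)).updateCol 0 fun i => b i).submatrix
      Fin.succ (Fin.succAbove 0) = hessenbergToeplitz s a (n + 1) := by
    ext i j
    simp [hessenbergToeplitz]
  have minor_one : ((hessenbergToeplitz s a (n + 2)).updateCol 0 fun i => b i).submatrix
      Fin.succ (Fin.succ 0).succAbove =
        (hessenbergToeplitz s a (n + 1)).updateCol 0 fun i => b (i + 1) := by
    ext i j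
    simp only [Matrix.submatrix_apply]
    induction j using Fin.cases <;> simp [hessenbergToeplitz]
  rw [Matrix.det_succ_row_zero, Fin.sum_univ_succ, Fin.sum_univ_succ, minor_zero, minor_one,
    Finset.sum_eq_zero fun j _ => by simp [hessenbergToeplitz]]
  simp [hessenbergToeplitz]

theorem det_updateCol_zero (b : ℕ → R) (n : ℕ) :
    ((hessenbergToeplitz s a (n + 1)).updateCol 0 fun i => b i).det =
      ∑ r ∈ range (n + 1), s ^ r * b r * (hessenbergToeplitz s a (n - r)).det := by
  induction n generalizing b with
  | zero => simp
  | succ n ih =>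
    rw [det_updateCol_zero_succ, ih fun i => b (i + 1), sum_range_succ' _ (n + 1), mul_sum,
      add_comm]
    congr 1
    · refine sum_congr rfl fun r _ => ?_
      rw [Nat.add_sub_add_right]
      ring
    · simp

theorem det_succ (n : ℕ) :
    (hessenbergToeplitz s a (n + 1)).det =
      ∑ r ∈ range (n + 1), s ^ r * a r * (hessenbergToeplitz s a (n - r)).det := by
  have first_col : (fun i : Fin (n + 1) => a i) = fun i => hessenbergToeplitz s a (n + 1) i 0 := by
    ext i
    simp [hessenbergToeplitz]
  rw [← det_updateCol_zero, first_col, Matrix.updateCol_eq_self]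

end hessenbergToeplitz

theorem eq_of_convolution_recurrence (w d e : ℕ → R) (h0 : d 0 = e 0)
    (hd : ∀ n, d (n + 1) = ∑ r ∈ range (n + 1), w r * d (n - r))
    (he : ∀ n, e (n + 1) = ∑ r ∈ range (n + 1), w r * e (n - r)) : d = e := by
  funext n
  induction n using Nat.strong_induction_on with
  | _ n ih =>
    cases n with
    | zero => exact h0
    | succ n =>
      rw [hd, he]
      exact sum_congr rfl fun r hr => by rw [ih (n - r) (by grind)]

theorem linearRecurrence_eq_sum_range (k : ℕ) (c f : ℤ → R)
    (hneg : ∀ n : ℤ, 1 - (k : ℤ) ≤ n → n < 0 → f n = 0)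
    (hrec : ∀ n : ℤ, 0 < n → f n = ∑ j ∈ Icc (1 : ℤ) k, c j * f (n - j)) (m : ℕ) :
    f (m + 1 : ℕ) = ∑ r ∈ range (m + 1), (if r < k then c (r + 1) else 0) * f (m - r : ℕ) := by
  have shift : ∑ j ∈ Icc (1 : ℤ) k, c j * f ((m + 1 : ℕ) - j) =
      ∑ r ∈ range k, c (r + 1) * f (m - r) :=
    sum_nbij' (fun j => (j - 1).toNat) (fun r => r + 1) (by intro j hj; simp at hj ⊢; omega)
      (by intro r hr; simp at hr ⊢; omega) (by intro j hj; simp at hj ⊢; omega)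
      (by intro r hr; simp) (by
        intro j hj
        simp only [mem_Icc] at hj
        rw [show ((j - 1).toNat : ℤ) = j - 1 by omega]
        push_cast
        ring_nf)
  have drop_tail : ∑ r ∈ range k, c (r + 1) * f (m - r) =
      ∑ r ∈ range (min (m + 1) k), c (r + 1) * f (m - r) := by
    refine (sum_subset (range_subset_range.2 (min_le_right _ _)) fun r hr hr' => ?_).symm
    simp only [mem_range] at hr hr'
    rw [hneg _ (by omega) (by omega), mul_zero]
  have filter_eq : (range (m + 1)).filter (· < k) = range (min (m + 1) k) := by
    ext r
    simp only [mem_filter, mem_range]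
    omega
  simp only [ite_mul, zero_mul]
  rw [hrec _ (by positivity), shift, drop_tail, ← sum_filter, filter_eq]
  exact sum_congr rfl fun r hr => by
    rw [Nat.cast_sub (by simp only [mem_range] at hr; omega)]

end

theorem of_bEntry_eq_hessenbergToeplitz (k : ℕ) (t : ℤ → ℂ) (n : ℕ) :
    Matrix.of (fun i j : Fin n => bEntry k t (i.1 + 1) (j.1 + 1)) =
      hessenbergToeplitz (t 2) (fun r => if r < k then t (r + 1) / t 2 ^ r else 0) n := by
  ext i j
  simp only [bEntry, hessenbergToeplitz, Matrix.of_apply]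
  split_ifs <;> try first | rfl | omega
  have hdiff : ((i.1 + 1 : ℕ) : ℤ) - (j.1 + 1 : ℕ) = (i.1 - j.1 : ℕ) := by omega
  rw [hdiff, zpow_natCast]

theorem det_B_eq_kSOkF_general (k : ℕ) (hk : 2 ≤ k) (c : ℤ → ℂ) (hc2 : c 2 ≠ 0)
    (t : ℤ → ℂ) (htc : ∀ j : ℤ, 1 ≤ j → j ≤ (k : ℤ) → t j = c j)
    (f₁ : ℤ → ℂ) (hf₁zero : f₁ 0 = 1)
    (hf₁neg : ∀ n : ℤ, 1 - (k : ℤ) ≤ n → n < 0 → f₁ n = 0)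
    (hf₁rec : ∀ n : ℤ, 0 < n →
      f₁ n = ∑ j ∈ Finset.Icc (1 : ℤ) (k : ℤ), c j * f₁ (n - j))
    (n : ℕ) :
    detH n (bEntry k t) = f₁ (n : ℤ) := by
  have ht2 : t 2 ≠ 0 := by rwa [htc 2 (by norm_num) (by exact_mod_cast hk)]
  have weights (r : ℕ) : t 2 ^ r * (if r < k then t (r + 1) / t 2 ^ r else 0) =
      if r < k then c (r + 1) else 0 := by
    split_ifs with hr
    · rw [mul_div_cancel₀ _ (pow_ne_zero r ht2), htc _ (by omega) (by omega)]
    · rw [mul_zero]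
  have dets := eq_of_convolution_recurrence (fun r => if r < k then c (r + 1) else 0)
    (fun m => (hessenbergToeplitz (t 2) (fun r => if r < k then t (r + 1) / t 2 ^ r else 0) m).det)
    (fun m => f₁ m) (by simp [hf₁zero])
    (fun m => by simp only [hessenbergToeplitz.det_succ, weights])
    (linearRecurrence_eq_sum_range k c f₁ hf₁neg hf₁rec)
  rw [detH, of_bEntry_eq_hessenbergToeplitz]
  exact congrFun dets n

theorem det_B_eq_kSOkF (k : ℕ) (hk : 2 ≤ k) (c : ℤ → ℂ) (hc2 : c 2 ≠ 0)
    (t : ℤ → ℂ) (ht0 : t 0 = 1) (htc : ∀ j : ℤ, 1 ≤ j → j ≤ (k : ℤ) → t j = c j)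
    (f₁ : ℤ → ℂ) (hf₁zero : f₁ 0 = 1)
    (hf₁neg : ∀ n : ℤ, 1 - (k : ℤ) ≤ n → n < 0 → f₁ n = 0)
    (hf₁rec : ∀ n : ℤ, 0 < n →
      f₁ n = ∑ j ∈ Finset.Icc (1 : ℤ) (k : ℤ), c j * f₁ (n - j))
    (n : ℕ) (hn : 1 ≤ n) :
    detH n (bEntry k t) = f₁ (n : ℤ) :=
  det_B_eq_kSOkF_general k hk c hc2 t htc f₁ hf₁zero hf₁neg hf₁rec n
end

section
/- Let k ≥ 2 be an integer and n ≥ 1. If B_{k,n} is formed with t_1 = 2 and t_j = 1 for 2 ≤ j ≤ k, then det(B_{k,n}) = p^k_{k,n+1}. -/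
open Finset

/-
With `t₂ = 1` the matrix `B_{k,n}` is a lower Hessenberg Toeplitz matrix with superdiagonal `-1`
and first column `(2, 1, …, 1, 0, …)` (`k - 1` ones).  Expanding along the first column, the minor
of the entry in row `i` is block lower triangular: a triangular block with diagonal `-1` of size
`i`, and a copy of `B_{k,n-1-i}`.  Hence, with `c` the first column,
`det B_{k,n+1} = Σ_{i ≤ n} c_i det B_{k,n-i}`, the signs cancelling.
The shifted Pell sequence `n ↦ p_{n+1}` satisfies the same convolution recurrence, because the terms
of the Pell recurrence reaching below index `1` vanish, and both start at `1`.
-/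

theorem eq_of_convolution_recurrence_s8 {R : Type*} [Semiring R] {u v : ℕ → R} (b : ℕ → R)
    (h0 : u 0 = v 0) (hu : ∀ n, u (n + 1) = ∑ i ∈ range (n + 1), b i * u (n - i))
    (hv : ∀ n, v (n + 1) = ∑ i ∈ range (n + 1), b i * v (n - i)) : u = v := by
  funext n
  induction n using Nat.strong_induction_on with
  | _ n ih =>
    cases n with
    | zero => exact h0
    | succ n => rw [hu, hv]; exact sum_congr rfl fun i _ => by rw [ih (n - i) (by omega)]

section ToeplitzHessenberg

variable {R : Type*} [CommRing R]

def toeplitzHessenberg (a : R) (c : ℕ → R) (n : ℕ) : Matrix (Fin n) (Fin n) R :=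
  Matrix.of fun i j => if (j : ℕ) = i + 1 then a else if (j : ℕ) ≤ i then c (i - j) else 0

variable (a : R) (c : ℕ → R)

@[simp]
theorem toeplitzHessenberg_apply {n : ℕ} (i j : Fin n) :
    toeplitzHessenberg a c n i j =
      if (j : ℕ) = i + 1 then a else if (j : ℕ) ≤ i then c (i - j) else 0 :=
  rfl

theorem toeplitzHessenberg_submatrix_succ_succ (n : ℕ) :
    (toeplitzHessenberg a c (n + 1)).submatrix Fin.succ Fin.succ = toeplitzHessenberg a c n := by
  ext i j
  simp

theorem det_toeplitzHessenberg_submatrix_succAbove_succ (m : ℕ) (i : Fin (m + 1)) :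
    ((toeplitzHessenberg a c (m + 1)).submatrix i.succAbove Fin.succ).det =
      a ^ (i : ℕ) * (toeplitzHessenberg a c (m - i)).det := by
  induction m with
  | zero =>
    obtain rfl : i = 0 := Fin.fin_one_eq_zero i
    simp [toeplitzHessenberg_submatrix_succ_succ]
  | succ m ih =>
    cases i using Fin.cases with
    | zero =>
      rw [Fin.succAbove_zero, toeplitzHessenberg_submatrix_succ_succ, Fin.val_zero, pow_zero,
        one_mul, Nat.sub_zero]
    | succ i =>
      -- the first row of this minor is `(a, 0, …, 0)`
      have hcomp : i.succ.succAbove ∘ Fin.succ = Fin.succ ∘ i.succAbove :=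
        funext fun j => Fin.succ_succAbove_succ i j
      rw [Matrix.det_succ_row_zero,
        Finset.sum_eq_single 0 (fun j _ hj => by simp [hj]) (by simp)]
      simp only [Matrix.submatrix_apply, Matrix.submatrix_submatrix, hcomp, Fin.succAbove_zero]
      rw [← Matrix.submatrix_submatrix, toeplitzHessenberg_submatrix_succ_succ, ih, Fin.val_succ,
        Nat.add_sub_add_right]
      simp [pow_succ]
      ring

theorem det_toeplitzHessenberg_succ (n : ℕ) :
    (toeplitzHessenberg a c (n + 1)).det =
      ∑ i : Fin (n + 1), (-a) ^ (i : ℕ) * c i * (toeplitzHessenberg a c (n - i)).det := by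
  rw [Matrix.det_succ_column_zero]
  refine Finset.sum_congr rfl fun i _ => ?_
  rw [det_toeplitzHessenberg_submatrix_succAbove_succ, toeplitzHessenberg_apply, if_neg (by simp),
    if_pos (by simp), Fin.val_zero, Nat.sub_zero, neg_pow]
  ring

end ToeplitzHessenberg

def pellCoeff (k d : ℕ) : ℕ := if d = 0 then 2 else if d < k then 1 else 0

section PellRecurrence

variable {R : Type*} [Semiring R] {k : ℕ} {p : ℤ → R}

theorem pell_one (hk : 2 ≤ k) (hpinit : p (1 - (k : ℤ)) = 1)
    (hpzero : ∀ n : ℤ, 1 - (k : ℤ) < n → n ≤ 0 → p n = 0)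
    (hprec : ∀ n : ℤ, 0 < n →
      p n = 2 * p (n - 1) + ∑ j ∈ Finset.Icc (2 : ℤ) (k : ℤ), p (n - j)) : p 1 = 1 := by
  have hk2 : (2 : ℤ) ≤ (k : ℤ) := by exact_mod_cast hk
  rw [hprec 1 one_pos, sub_self, hpzero 0 (by omega) le_rfl, mul_zero, zero_add,
    sum_eq_single_of_mem (k : ℤ) (mem_Icc.2 ⟨hk2, le_rfl⟩), hpinit]
  intro j hj hjk
  rw [mem_Icc] at hj
  exact hpzero _ (by omega) (by omega)

theorem pell_add_one_eq_sum (hk : 1 ≤ k)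
    (hprec : ∀ n : ℤ, 0 < n →
      p n = 2 * p (n - 1) + ∑ j ∈ Finset.Icc (2 : ℤ) (k : ℤ), p (n - j))
    (m : ℤ) (hm : 0 ≤ m) : p (m + 1) = ∑ i ∈ range k, (pellCoeff k i : R) * p (m - i) := by
  obtain ⟨k, rfl⟩ : ∃ k', k = k' + 1 := ⟨k - 1, by omega⟩
  have hIcc : ∑ j ∈ Icc (2 : ℤ) ((k + 1 : ℕ) : ℤ), p (m + 1 - j) =
      ∑ i ∈ range k, p (m - (i + 1 : ℕ)) := by
    refine sum_nbij' (fun j => (j - 2).toNat) (fun i => (i : ℤ) + 2) ?_ ?_ ?_ ?_ ?_ <;>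
      intro a ha <;> simp only [mem_Icc, mem_range] at ha ⊢
    all_goals first | omega | (congr 1; omega)
  rw [hprec (m + 1) (by omega), hIcc, sum_range_succ', add_comm, add_sub_cancel_right]
  congr 1
  · exact sum_congr rfl fun i hi => by simp [pellCoeff, mem_range.1 hi]
  · simp [pellCoeff]

theorem pell_add_two_eq_sum (hk : 1 ≤ k)
    (hpzero : ∀ n : ℤ, 1 - (k : ℤ) < n → n ≤ 0 → p n = 0)
    (hprec : ∀ n : ℤ, 0 < n →
      p n = 2 * p (n - 1) + ∑ j ∈ Finset.Icc (2 : ℤ) (k : ℤ), p (n - j))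
    (n : ℕ) :
    p (n + 1 + 1) = ∑ i ∈ range (n + 1), (pellCoeff k i : R) * p (n + 1 - i) := by
  have hvanish : ∀ i, min (n + 1) k ≤ i → (pellCoeff k i : R) * p (n + 1 - i) = 0 := by
    intro i hi
    by_cases hik : i < k
    · rw [hpzero _ (by omega) (by omega), mul_zero]
    · simp [pellCoeff, hik, show i ≠ 0 by omega]
  have htrunc : ∀ N, min (n + 1) k ≤ N →
      ∑ i ∈ range N, (pellCoeff k i : R) * p (n + 1 - i) =
        ∑ i ∈ range (min (n + 1) k), (pellCoeff k i : R) * p (n + 1 - i) := fun N hN =>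
    (sum_subset (range_subset_range.2 hN) fun i _ hi => hvanish i (by simp at hi; omega)).symm
  rw [pell_add_one_eq_sum hk hprec _ (by positivity), htrunc _ (min_le_right _ _),
    htrunc _ (min_le_left _ _)]

end PellRecurrence

theorem bEntry_succ_succ {k : ℕ} (hk : 2 ≤ k) {t : ℤ → ℂ} (ht1 : t 1 = 2)
    (ht : ∀ j : ℤ, 2 ≤ j → j ≤ k → t j = 1) (i j : ℕ) :
    bEntry k t (i + 1) (j + 1) =
      if j = i + 1 then -1 else if j ≤ i then (pellCoeff k (i - j) : ℂ) else 0 := by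
  have ht2 : t 2 = 1 := ht 2 le_rfl (by exact_mod_cast hk)
  rcases Nat.lt_or_ge i j with hij | hji
  · have hij' : ¬ j ≤ i := by omega
    by_cases hj : j = i + 1
    · simp [bEntry, hj, ht2]
    · rw [bEntry, if_neg (by omega), if_neg (by omega), if_neg hj, if_neg hij']
  · obtain ⟨d, rfl⟩ := Nat.exists_eq_add_of_le hji
    have hd : ((j + d + 1 : ℕ) : ℤ) - ((j + 1 : ℕ) : ℤ) = d := by push_cast; ring
    rw [bEntry, if_neg (show ¬ j + 1 = j + d + 1 + 1 by omega), hd, ht2, one_zpow, div_one,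
      if_neg (show ¬ j = j + d + 1 by omega), if_pos (Nat.le_add_right j d),
      Nat.add_sub_cancel_left]
    by_cases hdk : d < k
    · rw [if_pos ⟨by positivity, by exact_mod_cast hdk⟩]
      rcases Nat.eq_zero_or_pos d with rfl | hd0
      · simp [pellCoeff, ht1]
      · rw [ht _ (by omega) (by omega)]; simp [pellCoeff, hdk, hd0.ne']
    · rw [if_neg (by omega)]
      simp [pellCoeff, hdk, show d ≠ 0 by omega]

theorem detH_bEntry_eq_det_toeplitzHessenberg {k : ℕ} (hk : 2 ≤ k) {t : ℤ → ℂ}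
    (ht1 : t 1 = 2) (ht : ∀ j : ℤ, 2 ≤ j → j ≤ k → t j = 1) (n : ℕ) :
    detH n (bEntry k t) = (toeplitzHessenberg (-1) (fun d => (pellCoeff k d : ℂ)) n).det := by
  unfold detH toeplitzHessenberg
  simp only [bEntry_succ_succ hk ht1 ht]

theorem det_B_eq_kSOkP_general (k : ℕ) (hk : 2 ≤ k) (t : ℤ → ℂ) (ht1 : t 1 = 2)
    (ht : ∀ j : ℤ, 2 ≤ j → j ≤ (k : ℤ) → t j = 1)
    (p : ℤ → ℂ) (hpinit : p (1 - (k : ℤ)) = 1)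
    (hpzero : ∀ n : ℤ, 1 - (k : ℤ) < n → n ≤ 0 → p n = 0)
    (hprec : ∀ n : ℤ, 0 < n →
      p n = 2 * p (n - 1) + ∑ j ∈ Finset.Icc (2 : ℤ) (k : ℤ), p (n - j))
    (n : ℕ) :
    detH n (bEntry k t) = p ((n : ℤ) + 1) := by
  set w : ℕ → ℂ := fun d => (pellCoeff k d : ℂ)
  have hdet : (fun m => (toeplitzHessenberg (-1) w m).det) = fun m : ℕ => p ((m : ℤ) + 1) := by
    refine eq_of_convolution_recurrence_s8 w ?_ (fun m => ?_) (fun m => ?_)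
    · simp [pell_one hk hpinit hpzero hprec]
    · rw [det_toeplitzHessenberg_succ, Fin.sum_univ_eq_sum_range
        (fun i => (-(-1 : ℂ)) ^ i * w i * (toeplitzHessenberg (-1) w (m - i)).det)]
      simp
    · rw [Nat.cast_succ, pell_add_two_eq_sum (by omega) hpzero hprec]
      refine sum_congr rfl fun i hi => ?_
      rw [Nat.cast_sub (by simp at hi; omega), sub_add_eq_add_sub]
  rw [detH_bEntry_eq_det_toeplitzHessenberg hk ht1 ht]
  exact congrFun hdet n

theorem det_B_eq_kSOkP (k : ℕ) (hk : 2 ≤ k) (t : ℤ → ℂ) (ht0 : t 0 = 1) (ht1 : t 1 = 2)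
    (ht : ∀ j : ℤ, 2 ≤ j → j ≤ (k : ℤ) → t j = 1)
    (p : ℤ → ℂ) (hpinit : p (1 - (k : ℤ)) = 1)
    (hpzero : ∀ n : ℤ, 1 - (k : ℤ) < n → n ≤ 0 → p n = 0)
    (hprec : ∀ n : ℤ, 0 < n →
      p n = 2 * p (n - 1) + ∑ j ∈ Finset.Icc (2 : ℤ) (k : ℤ), p (n - j))
    (n : ℕ) (hn : 1 ≤ n) :
    detH n (bEntry k t) = p ((n : ℤ) + 1) :=
  det_B_eq_kSOkP_general k hk t ht1 ht p hpinit hpzero hprec n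
end

section
/- Let A_n = (a_{ij}) be an n×n lower Hessenberg matrix (over the complex numbers) for n ≥ 1, and for 0 ≤ r ≤ n let A_r denote its leading principal r×r submatrix, with per(A_0) = 1. Then per(A_1) = a_{11}, and for n ≥ 2, per(A_n) = a_{n,n}·per(A_{n−1}) + Σ_{r=1}^{n−1} ( a_{n,r} · ∏_{j=r}^{n−1} a_{j,j+1} · per(A_{r−1}) ). -/
/-!
Write `G_k(b)` for the permanent of `A_{k+1}` with its last row replaced by `b`. Expanding
`G_{k+1}(b)` along its last column, which for a lower Hessenberg matrix has nonzero entries only in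
the last two rows, gives `G_{k+1}(b) = b_{k+2} per(A_{k+1}) + a_{k+1,k+2} G_k(b)`. Unrolling this
recursion, and taking for `b` the last row of `A_{k+1}` itself, yields the expansion.
-/

open Finset Equiv

noncomputable def perH (m : ℕ) (a : ℕ → ℕ → ℂ) : ℂ :=
  ∑ σ : Equiv.Perm (Fin m), ∏ i : Fin m, a (i.1 + 1) ((σ i).1 + 1)

namespace Matrix

variable {R : Type*} [CommSemiring R]

theorem permanent_succ_column_last {m : ℕ} (M : Matrix (Fin (m + 1)) (Fin (m + 1)) R) :
    M.permanent = ∑ p, M p (Fin.last m) *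
      (M.submatrix (Equiv.swap (Fin.last m) p ∘ Fin.castSucc) Fin.castSucc).permanent := by
  let E : Fin (m + 1) × Perm (Fin m) ≃ Perm (Fin (m + 1)) :=
    (finSuccEquivLast.prodCongr (Equiv.refl _)).trans
      (Perm.decomposeOption.symm.trans finSuccEquivLast.symm.permCongr)
  have hE_last : ∀ p e, E (p, e) (Fin.last m) = p := by
    intro p e
    simp [E, Equiv.permCongr_apply, Perm.decomposeOption_symm_apply]
  have hE_castSucc : ∀ p e c, E (p, e) c.castSucc = Equiv.swap (Fin.last m) p (e c).castSucc := by
    intro p e c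
    simp [E, Equiv.permCongr_apply, Perm.decomposeOption_symm_apply,
      finSuccEquivLast.symm.injective.map_swap]
  simp only [permanent, ← E.sum_comp, Fin.prod_univ_castSucc, Fintype.sum_prod_type, mul_sum]
  simp [hE_last, hE_castSucc, mul_comm]

end Matrix

open Matrix

/-- The leading principal submatrix `A_m`; the entries `a i j` are indexed from `1`. -/
def leadingMatrix {R : Type*} (m : ℕ) (a : ℕ → ℕ → R) : Matrix (Fin m) (Fin m) R :=
  Matrix.of fun i j => a (i.1 + 1) (j.1 + 1)

theorem perH_eq_permanent (m : ℕ) (a : ℕ → ℕ → ℂ) : perH m a = (leadingMatrix m a).permanent := by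
  rw [← permanent_transpose]
  rfl

section Hessenberg

variable {R : Type*} [CommSemiring R]

theorem permanent_updateRow_last_leadingMatrix_succ (a : ℕ → ℕ → R) (b : ℕ → R) (k : ℕ)
    (hcol : ∀ i < k, a (i + 1) (k + 2) = 0) :
    ((leadingMatrix (k + 2) a).updateRow (Fin.last (k + 1)) fun j => b (j.1 + 1)).permanent =
      b (k + 2) * (leadingMatrix (k + 1) a).permanent + a (k + 1) (k + 2) *
        ((leadingMatrix (k + 1) a).updateRow (Fin.last k) fun j => b (j.1 + 1)).permanent := by
  set M := (leadingMatrix (k + 2) a).updateRow (Fin.last (k + 1)) fun j => b (j.1 + 1)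
  have h_above : ∀ i : Fin k, M i.castSucc.castSucc (Fin.last (k + 1)) = 0 := fun i => by
    simpa [M, leadingMatrix, updateRow_ne, Fin.castSucc_ne_last] using hcol i i.2
  have h_pivot : M (Fin.last k).castSucc (Fin.last (k + 1)) = a (k + 1) (k + 2) := by
    simp [M, leadingMatrix, updateRow_ne, Fin.castSucc_ne_last]
  have h_corner : M (Fin.last (k + 1)) (Fin.last (k + 1)) = b (k + 2) := by
    simp [M]
  have h_minor_corner :
      M.submatrix (Equiv.swap (Fin.last (k + 1)) (Fin.last (k + 1)) ∘ Fin.castSucc)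
        Fin.castSucc = leadingMatrix (k + 1) a := by
    ext r c
    simp [M, leadingMatrix, updateRow_ne, Fin.castSucc_ne_last]
  have h_minor_pivot :
      M.submatrix (Equiv.swap (Fin.last (k + 1)) (Fin.last k).castSucc ∘ Fin.castSucc)
        Fin.castSucc = (leadingMatrix (k + 1) a).updateRow (Fin.last k) fun j => b (j.1 + 1) := by
    ext r c
    induction r using Fin.lastCases
    · simp [M, leadingMatrix]
    · simp [M, leadingMatrix, updateRow_ne, Fin.castSucc_ne_last, swap_apply_of_ne_of_ne]
  rw [permanent_succ_column_last, Fin.sum_univ_castSucc, Fin.sum_univ_castSucc, h_minor_corner,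
    h_minor_pivot, h_pivot, h_corner]
  simp only [h_above, zero_mul, sum_const_zero, zero_add, add_comm]

theorem permanent_updateRow_last_leadingMatrix_of_hessenberg (a : ℕ → ℕ → R) (b : ℕ → R)
    (k : ℕ) (hHess : ∀ i j, 1 ≤ i → i + 1 < j → j ≤ k + 1 → a i j = 0) :
    ((leadingMatrix (k + 1) a).updateRow (Fin.last k) fun j => b (j.1 + 1)).permanent =
      ∑ r ∈ Icc 1 (k + 1),
        b r * (∏ j ∈ Icc r k, a j (j + 1)) * (leadingMatrix (r - 1) a).permanent := by
  induction k with
  | zero => simp [permanent_unique, permanent_isEmpty]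
  | succ k ih =>
    rw [permanent_updateRow_last_leadingMatrix_succ a b k
        fun i hi => hHess _ _ (by omega) (by omega) le_rfl,
      ih fun i j hi hij hj => hHess i j hi hij (by omega),
      sum_Icc_succ_top (by omega : 1 ≤ k + 1 + 1), mul_sum, add_comm]
    congr 1
    · refine sum_congr rfl fun r hr => ?_
      rw [prod_Icc_succ_top (by simp at hr; omega)]
      ring
    · simp

theorem permanent_leadingMatrix_succ_of_hessenberg (a : ℕ → ℕ → R) (k : ℕ)
    (hHess : ∀ i j, 1 ≤ i → i + 1 < j → j ≤ k + 1 → a i j = 0) :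
    (leadingMatrix (k + 1) a).permanent = a (k + 1) (k + 1) * (leadingMatrix k a).permanent +
      ∑ r ∈ Icc 1 k,
        a (k + 1) r * (∏ j ∈ Icc r k, a j (j + 1)) * (leadingMatrix (r - 1) a).permanent := by
  have h_row : ((leadingMatrix (k + 1) a).updateRow (Fin.last k) fun j => a (k + 1) (j.1 + 1)) =
      leadingMatrix (k + 1) a :=
    updateRow_eq_self _ _
  rw [← h_row, permanent_updateRow_last_leadingMatrix_of_hessenberg a _ k hHess,
    sum_Icc_succ_top (by omega), add_comm]
  simp

end Hessenberg

theorem hessenberg_per_expansion_general (n : ℕ) (a : ℕ → ℕ → ℂ)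
    (hHess : ∀ i j : ℕ, 1 ≤ i → i ≤ n → 1 ≤ j → j ≤ n → i + 1 < j → a i j = 0) :
    perH 1 a = a 1 1 ∧
    (2 ≤ n →
      perH n a = a n n * perH (n - 1) a +
        ∑ r ∈ Finset.Icc 1 (n - 1),
          a n r * (∏ j ∈ Finset.Icc r (n - 1), a j (j + 1)) * perH (r - 1) a) := by
  refine ⟨by simp [perH], fun h2n => ?_⟩
  obtain ⟨k, rfl⟩ : ∃ k, n = k + 1 := ⟨n - 1, by omega⟩
  simp only [perH_eq_permanent, add_tsub_cancel_right]
  exact permanent_leadingMatrix_succ_of_hessenberg a k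
    fun i j hi hij hj => hHess i j hi (by omega) (by omega) hj hij

/-- Permanent expansion of a lower Hessenberg matrix along its last row.
Here `a` gives the (1-based) entries of the matrix, `perH m a` is the permanent
of the leading principal `m × m` submatrix (so `perH 0 a = 1`). -/
theorem hessenberg_per_expansion (n : ℕ) (hn : 1 ≤ n) (a : ℕ → ℕ → ℂ)
    (hHess : ∀ i j : ℕ, 1 ≤ i → i ≤ n → 1 ≤ j → j ≤ n → i + 1 < j → a i j = 0) :
    perH 1 a = a 1 1 ∧
    (2 ≤ n →
      perH n a = a n n * perH (n - 1) a +
        ∑ r ∈ Finset.Icc 1 (n - 1),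
          a n r * (∏ j ∈ Finset.Icc r (n - 1), a j (j + 1)) * perH (r - 1) a) :=
  hessenberg_per_expansion_general n a hHess
end

section
/- Let k ≥ 2 be an integer, t_1, …, t_k complex numbers with t_2 ≠ 0, and n ≥ 1. Then per(H_{k,n}) = F_{k,n+1}(t). -/
/-!
`H_{k,n}` is the Toeplitz matrix `(a_{r-s})` with `a_j = i^j t_{j+1} / t₂^j` for `-1 ≤ j < k` and
`a_j = 0` otherwise, so it is lower Hessenberg. Expanding the permanent of such a matrix along its
first row gives `per H_{n+1} = ∑ⱼ a_{-1}^j a_j per H_{n-j}`, and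
`a_{-1}^j a_j = (-i t₂)^j i^j t_{j+1} / t₂^j = t_{j+1}`: this is the recurrence of `F_{k,n+1}`.
-/

open Finset

/-- Entry (r,s) (1-based) of the matrix `H_{k,n}`:
`i^{r-s} * t_{r-s+1} / t_2^{r-s}` if `-1 ≤ r-s < k`, and `0` otherwise. -/
noncomputable def hEntry (k : ℕ) (t : ℤ → ℂ) (r s : ℕ) : ℂ :=
  if -1 ≤ (r : ℤ) - s ∧ (r : ℤ) - s < k then
    Complex.I ^ ((r : ℤ) - s) * t ((r : ℤ) - s + 1) / t 2 ^ ((r : ℤ) - s)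
  else 0

theorem perH_congr {n : ℕ} {a b : ℕ → ℕ → ℂ} (h : ∀ r s, 0 < r → 0 < s → a r s = b r s) :
    perH n a = perH n b :=
  sum_congr rfl fun _ _ => prod_congr rfl fun _ _ => h _ _ (Nat.succ_pos _) (Nat.succ_pos _)

theorem perH_zero (a : ℕ → ℕ → ℂ) : perH 0 a = 1 := by
  simp [perH]

theorem perH_succ (n : ℕ) (a : ℕ → ℕ → ℂ) :
    perH (n + 1) a = ∑ p : Fin (n + 1),
      a 1 (p + 1) * perH n (fun r s => a (r + 1) (if s ≤ p then s else s + 1)) := by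
  rw [perH, univ_perm_fin_succ, ← univ_product_univ, sum_map, sum_product]
  refine sum_congr rfl fun p _ => ?_
  have hminor : ∀ x : Fin n, (if (x : ℕ) + 1 ≤ p then (x : ℕ) + 1 else (x : ℕ) + 1 + 1)
      = (p.succAbove x : ℕ) + 1 := by
    intro x
    rw [Fin.succAbove]
    split_ifs <;> simp only [Fin.lt_def, Fin.val_castSucc, Fin.val_succ] at * <;> omega
  simp only [Equiv.toEmbedding_apply, Fin.prod_univ_succ, Equiv.Perm.decomposeFin_symm_apply_zero,
    Equiv.Perm.decomposeFin_symm_apply_succ, perH, mul_sum, hminor]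
  cases p using Fin.cases with
  | zero => simp
  | succ q =>
    simp only [← Fin.succAbove_cycleRange]
    exact Fintype.sum_equiv (Equiv.mulLeft q.cycleRange) _ _ fun _ => rfl

def toeplitz (a : ℤ → ℂ) (r s : ℕ) : ℂ := a (r - s)

/-- Expanding a Hessenberg Toeplitz matrix along its first row, the minor of the entry `(1, 2)` is
again of this form, with `d` increased by one. -/
def toeplitzShiftCol (a : ℤ → ℂ) (d : ℕ) (r s : ℕ) : ℂ :=
  if s = 1 then a (r - 1 + d) else a (r - s)

theorem toeplitzShiftCol_zero (a : ℤ → ℂ) : toeplitzShiftCol a 0 = toeplitz a := by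
  ext r s
  unfold toeplitzShiftCol toeplitz
  split_ifs with h <;> simp [h]

section Hessenberg

variable {a : ℤ → ℂ}

theorem perH_toeplitzShiftCol_add_two (ha : ∀ j ≤ -2, a j = 0) (n d : ℕ) :
    perH (n + 2) (toeplitzShiftCol a d) =
      a d * perH (n + 1) (toeplitz a) + a (-1) * perH (n + 1) (toeplitzShiftCol a (d + 1)) := by
  rw [perH_succ, Fin.sum_univ_succ, Fin.sum_univ_succ, Fintype.sum_eq_zero, add_zero]
  · congr 1
    · congr 1
      · simp [toeplitzShiftCol]
      · refine perH_congr fun r s _ hs => ?_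
        simp [toeplitzShiftCol, toeplitz, Nat.pos_iff_ne_zero.mp hs]
    · congr 1
      refine perH_congr fun r s _ hs => ?_
      obtain rfl | hs2 : s = 1 ∨ 2 ≤ s := by omega
      · simp [toeplitzShiftCol]
      · simp [toeplitzShiftCol, show ¬s ≤ 1 by omega, show s ≠ 1 by omega, show s ≠ 0 by omega]
  · intro p
    rw [toeplitzShiftCol, if_neg (by simp), ha _ (by simp), zero_mul]

theorem perH_toeplitzShiftCol_succ (ha : ∀ j ≤ -2, a j = 0) (n d : ℕ) :
    perH (n + 1) (toeplitzShiftCol a d) =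
      ∑ j ∈ range (n + 1), a (-1) ^ j * a (d + j) * perH (n - j) (toeplitz a) := by
  induction n generalizing d with
  | zero => simp [perH_succ, perH_zero, toeplitzShiftCol]
  | succ n ih =>
    rw [perH_toeplitzShiftCol_add_two ha, ih, mul_sum, add_comm]
    conv_rhs => rw [sum_range_succ']
    congr 1
    · refine sum_congr rfl fun j _ => ?_
      push_cast
      ring_nf
    · simp

theorem perH_toeplitz_succ (ha : ∀ j ≤ -2, a j = 0) (n : ℕ) :
    perH (n + 1) (toeplitz a) =
      ∑ j ∈ range (n + 1), a (-1) ^ j * a j * perH (n - j) (toeplitz a) := by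
  simpa [toeplitzShiftCol_zero] using perH_toeplitzShiftCol_succ ha n 0

end Hessenberg

theorem eq_of_convolution_rec {P Q : ℕ → ℂ} (b : ℕ → ℂ) (h0 : P 0 = Q 0)
    (hP : ∀ n, P (n + 1) = ∑ j ∈ range (n + 1), b j * P (n - j))
    (hQ : ∀ n, Q (n + 1) = ∑ j ∈ range (n + 1), b j * Q (n - j)) : P = Q := by
  funext n
  induction n using Nat.strong_induction_on with
  | _ n ih =>
    cases n with
    | zero => exact h0
    | succ n =>
      rw [hP, hQ]
      exact sum_congr rfl fun j hj => by rw [ih (n - j) (by omega)]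

theorem genFib_succ_succ_eq_sum_range {k : ℕ} {t F : ℤ → ℂ} (hFneg : ∀ n : ℤ, n < 1 → F n = 0)
    (hFrec : ∀ n : ℤ, 1 ≤ n →
      F (n + 1) = ∑ j ∈ Finset.Icc (1 : ℤ) (k : ℤ), t j * F (n + 1 - j)) (n : ℕ) :
    F ((n + 1 : ℕ) + 1) =
      ∑ j ∈ range (n + 1), (if j < k then t (j + 1) else 0) * F ((n - j : ℕ) + 1) := by
  have hIcc : Icc (1 : ℤ) k = (range k).map (Nat.castEmbedding.trans (addLeftEmbedding 1)) := by
    rw [Int.Icc_eq_finset_map]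
    simp
  calc F ((n + 1 : ℕ) + 1)
      = ∑ j ∈ range k, t (j + 1) * F (n + 1 - j) := by
        rw [hFrec _ (by omega), hIcc, sum_map]
        refine sum_congr rfl fun j _ => ?_
        simp only [Function.Embedding.trans_apply, Nat.castEmbedding_apply, addLeftEmbedding_apply]
        push_cast
        ring_nf
    _ = ∑ j ∈ range (min (n + 1) k), t (j + 1) * F (n + 1 - j) := by
        refine (sum_subset (range_subset_range.2 (min_le_right _ _)) fun j hj hjn => ?_).symm
        simp only [mem_range, lt_min_iff, not_and, not_lt] at hj hjn
        rw [hFneg _ (by omega), mul_zero]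
    _ = _ := by
        rw [← range_inter_range]
        simp_rw [ite_mul, zero_mul, ← sum_filter]
        refine sum_congr (by ext; simp) fun j hj => ?_
        rw [Nat.cast_sub (by simp at hj; omega)]
        ring_nf

noncomputable def hDiag (k : ℕ) (t : ℤ → ℂ) (j : ℤ) : ℂ :=
  if -1 ≤ j ∧ j < k then Complex.I ^ j * t (j + 1) / t 2 ^ j else 0

theorem hEntry_eq_toeplitz (k : ℕ) (t : ℤ → ℂ) : hEntry k t = toeplitz (hDiag k t) := rfl

theorem hDiag_of_le {k : ℕ} {t : ℤ → ℂ} {j : ℤ} (hj : j ≤ -2) : hDiag k t j = 0 :=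
  if_neg (by omega)

theorem hDiag_neg_one_pow_mul {k : ℕ} {t : ℤ → ℂ} (ht0 : t 0 = 1) (ht2 : t 2 ≠ 0) (j : ℕ) :
    hDiag k t (-1) ^ j * hDiag k t j = if j < k then t (j + 1) else 0 := by
  have hsup : hDiag k t (-1) = -Complex.I * t 2 := by
    rw [hDiag, if_pos (by omega)]
    simp [ht0, zpow_neg, Complex.inv_I]
  have hI : -Complex.I * t 2 * Complex.I = t 2 := by
    rw [mul_right_comm, neg_mul, Complex.I_mul_I, neg_neg, one_mul]
  rw [hsup, hDiag]
  by_cases hj : j < k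
  · rw [if_pos ⟨by omega, by exact_mod_cast hj⟩, if_pos hj, zpow_natCast, zpow_natCast]
    calc (-Complex.I * t 2) ^ j * (Complex.I ^ j * t (j + 1) / t 2 ^ j)
        = (-Complex.I * t 2 * Complex.I) ^ j / t 2 ^ j * t (j + 1) := by ring
      _ = t (j + 1) := by rw [hI, div_self (pow_ne_zero _ ht2), one_mul]
  · rw [if_neg (by omega), if_neg hj, mul_zero]

theorem per_H_eq_genFibPoly_general (k : ℕ) (t : ℤ → ℂ) (ht0 : t 0 = 1) (ht2 : t 2 ≠ 0)
    (F : ℤ → ℂ) (hFneg : ∀ n : ℤ, n < 1 → F n = 0) (hF1 : F 1 = 1)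
    (hFrec : ∀ n : ℤ, 1 ≤ n →
      F (n + 1) = ∑ j ∈ Finset.Icc (1 : ℤ) (k : ℤ), t j * F (n + 1 - j))
    (n : ℕ) :
    perH n (hEntry k t) = F ((n : ℤ) + 1) := by
  have hrec := eq_of_convolution_rec (P := fun n => perH n (hEntry k t))
    (Q := fun n => F ((n : ℤ) + 1)) (fun j => if j < k then t (j + 1) else 0)
    (by simp [perH_zero, hF1])
    (fun n => by
      simp only [hEntry_eq_toeplitz, perH_toeplitz_succ (fun _ => hDiag_of_le) n,
        hDiag_neg_one_pow_mul ht0 ht2])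
    (genFib_succ_succ_eq_sum_range hFneg hFrec)
  exact congrFun hrec n

theorem per_H_eq_genFibPoly (k : ℕ) (hk : 2 ≤ k) (t : ℤ → ℂ) (ht0 : t 0 = 1) (ht2 : t 2 ≠ 0)
    (F : ℤ → ℂ) (hFneg : ∀ n : ℤ, n < 1 → F n = 0) (hF1 : F 1 = 1)
    (hFrec : ∀ n : ℤ, 1 ≤ n →
      F (n + 1) = ∑ j ∈ Finset.Icc (1 : ℤ) (k : ℤ), t j * F (n + 1 - j))
    (n : ℕ) (hn : 1 ≤ n) :
    perH n (hEntry k t) = F ((n : ℤ) + 1) :=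
  per_H_eq_genFibPoly_general k t ht0 ht2 F hFneg hF1 hFrec n
end

section
/- Let k ≥ 2 be an integer and n ≥ 1, and let D_{k,n} = (d_{ij}) be the n×n matrix with d_{ij} = 1 if −1 ≤ i−j < k and d_{ij} = 0 otherwise (1 ≤ i,j ≤ n). Then per(D_{k,n}) = f_{k,k+n−1}. -/
open Finset

/-- Entry (i,j) (1-based) of the matrix `D_{k,n}`:
`1` if `-1 ≤ i-j < k`, and `0` otherwise. -/
noncomputable def dEntry (k : ℕ) (i j : ℕ) : ℂ :=
  if -1 ≤ (i : ℤ) - j ∧ (i : ℤ) - j < k then 1 else 0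

/-!
A permutation `σ` contributes to `per D_{k,n}` iff `-1 ≤ i - σ i < k` for all `i`. If `σ j = 0`,
then `σ i ≤ i + 1` forces `σ i = i + 1` for `i < j`, so `σ` is the cycle `(0 1 … j)` on the first
`j + 1 ≤ k` points and an arbitrary such permutation of the remaining `n - j - 1` points. Hence the
count `c n` satisfies `c 0 = 1` and `c (n + 1) = ∑_{j < min k (n + 1)} c (n - j)`, the recursion
of compositions into parts of size at most `k`. The sequence `n ↦ f_{k,k+n-1}` satisfies the same
recursion: the terms with `j > n` vanish because `f_{k,1} = ⋯ = f_{k,k-2} = 0`.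
-/

open Equiv

def InBand (k : ℕ) {n : ℕ} (σ : Perm (Fin n)) : Prop :=
  ∀ i, (σ i : ℕ) ≤ i + 1 ∧ (i : ℕ) < σ i + k

instance (k n : ℕ) : DecidablePred (@InBand k n) :=
  fun _ => Fintype.decidableForallFintype

def bandCount (k n : ℕ) : ℕ := #{σ : Perm (Fin n) | InBand k σ}

lemma dEntry_add_one_add_one (k i j : ℕ) :
    dEntry k (i + 1) (j + 1) = if j ≤ i + 1 ∧ i < j + k then 1 else 0 := by
  unfold dEntry
  refine if_congr ?_ rfl rfl
  push_cast
  omega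

lemma perH_dEntry (k n : ℕ) : perH n (dEntry k) = bandCount k n := by
  simp only [perH, dEntry_add_one_add_one, Fintype.prod_boole]
  exact sum_boole (fun σ => InBand k σ) univ

lemma val_apply_eq_succ_of_lt {n : ℕ} {σ : Perm (Fin n)} (hσ : ∀ i, (σ i : ℕ) ≤ i + 1)
    {j : Fin n} (hj : (σ j : ℕ) = 0) {i : Fin n} (hij : i < j) : (σ i : ℕ) = i + 1 := by
  induction i using WellFoundedLT.induction with
  | _ i ih =>
    -- otherwise `σ i = c + 1` with `c < i`, and `σ c = c + 1` by induction
    by_contra hne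
    have hi0 : (σ i : ℕ) ≠ 0 := fun h0 => hij.ne (σ.injective (Fin.ext (h0.trans hj.symm)))
    have hle := hσ i
    obtain ⟨c, hc⟩ : ∃ c : Fin n, (c : ℕ) = σ i - 1 := ⟨⟨σ i - 1, by omega⟩, rfl⟩
    have hci : c < i := by rw [Fin.lt_def]; omega
    have hσc := ih c hci (hci.trans hij)
    exact hci.ne (σ.injective (Fin.ext (by omega)))

section CycleSumCongr

variable {a b : ℕ}

def cycleSumCongr (a : ℕ) {b : ℕ} (τ : Perm (Fin b)) : Perm (Fin (a + b)) :=
  finSumFinEquiv.permCongr (sumCongr (finRotate a) τ)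

@[simp]
lemma cycleSumCongr_castAdd (τ : Perm (Fin b)) (x : Fin a) :
    cycleSumCongr a τ (Fin.castAdd b x) = Fin.castAdd b (finRotate a x) := by
  simp [cycleSumCongr]

@[simp]
lemma cycleSumCongr_natAdd (τ : Perm (Fin b)) (y : Fin b) :
    cycleSumCongr a τ (Fin.natAdd a y) = Fin.natAdd a (τ y) := by
  simp [cycleSumCongr]

lemma cycleSumCongr_injective : Function.Injective (cycleSumCongr a (b := b)) := fun τ τ' h =>
  congrArg Prod.snd <| @Perm.sumCongrHom_injective _ _ (finRotate a, τ) (finRotate a, τ')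
    (finSumFinEquiv.permCongr.injective h)

lemma inBand_cycleSumCongr {k j : ℕ} (hjk : j < k) (τ : Perm (Fin b)) :
    InBand k (cycleSumCongr (j + 1) τ) ↔ InBand k τ := by
  have hcycle : ∀ x : Fin (j + 1),
      (finRotate (j + 1) x : ℕ) ≤ x + 1 ∧ (x : ℕ) < finRotate (j + 1) x + k := by
    intro x
    rw [coe_finRotate]
    split_ifs with hx
    · simp [hx, hjk]
    · omega
  rw [InBand, Fin.forall_fin_add]
  simp only [cycleSumCongr_castAdd, cycleSumCongr_natAdd, Fin.val_castAdd, Fin.val_natAdd,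
    hcycle, implies_true, true_and]
  exact forall_congr' fun y => by omega

lemma exists_cycleSumCongr_eq {j m : ℕ} {σ : Perm (Fin (j + 1 + m))}
    (hσ : ∀ i, (σ i : ℕ) ≤ i + 1) (hj : (σ (Fin.castAdd m (Fin.last j)) : ℕ) = 0) :
    ∃ τ, cycleSumCongr (j + 1) τ = σ := by
  have hcycle : ∀ x, σ (Fin.castAdd m x) = Fin.castAdd m (finRotate (j + 1) x) := by
    intro x
    ext
    rw [Fin.val_castAdd, coe_finRotate]
    split_ifs with hx
    · rw [hx, hj]
    · exact val_apply_eq_succ_of_lt hσ hj (Fin.lt_def.2 (Fin.val_lt_last hx))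
  let σ' : Perm (Fin (j + 1) ⊕ Fin m) := finSumFinEquiv.symm.permCongr σ
  have hinl : Set.MapsTo σ' (Set.range Sum.inl) (Set.range Sum.inl) := by
    rintro _ ⟨x, rfl⟩
    exact ⟨finRotate _ x, by simp [σ', hcycle]⟩
  obtain ⟨⟨ρ, τ⟩, hρτ⟩ := Perm.mem_sumCongrHom_range_of_perm_mapsTo_inl hinl
  refine ⟨τ, Equiv.ext fun i => Fin.addCases (fun x => ?_) (fun y => ?_) i⟩
  · simp [hcycle]
  · have hy := congr($hρτ (Sum.inr y))
    simp only [Perm.sumCongrHom_apply, sumCongr_apply, Sum.map_inr, σ', permCongr_apply,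
      symm_symm, finSumFinEquiv_apply_right] at hy
    rw [cycleSumCongr_natAdd, ← finSumFinEquiv_apply_right, hy, apply_symm_apply]

end CycleSumCongr

lemma card_inBand_symm_zero {k j m N : ℕ} [NeZero N] (hN : j + 1 + m = N) (hjk : j < k) :
    #{σ : Perm (Fin N) | InBand k σ ∧ (σ.symm 0 : ℕ) = j} = bandCount k m := by
  subst hN
  have hzero (σ : Perm (Fin (j + 1 + m))) :
      (σ.symm 0 : ℕ) = j ↔ (σ (Fin.castAdd m (Fin.last j)) : ℕ) = 0 := by
    rw [show (σ.symm 0 : ℕ) = j ↔ σ.symm 0 = Fin.castAdd m (Fin.last j) by rw [Fin.ext_iff]; rfl,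
      symm_apply_eq, eq_comm, Fin.ext_iff, Fin.val_zero]
  have hfiber : ({σ | InBand k σ ∧ (σ.symm 0 : ℕ) = j} : Finset (Perm (Fin (j + 1 + m)))) =
      ({τ | InBand k τ} : Finset (Perm (Fin m))).map
        ⟨cycleSumCongr (j + 1), cycleSumCongr_injective⟩ := by
    ext σ
    simp only [mem_filter, mem_univ, true_and, mem_map, Function.Embedding.coeFn_mk, hzero]
    constructor
    · rintro ⟨hσ, h0⟩
      obtain ⟨τ, rfl⟩ := exists_cycleSumCongr_eq (fun i => (hσ i).1) h0
      exact ⟨τ, (inBand_cycleSumCongr hjk τ).1 hσ, rfl⟩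
    · rintro ⟨τ, hτ, rfl⟩
      exact ⟨(inBand_cycleSumCongr hjk τ).2 hτ, by simp⟩
  rw [hfiber, card_map, bandCount]

lemma bandCount_zero (k : ℕ) : bandCount k 0 = 1 := by
  simp [bandCount, InBand]

lemma bandCount_succ (k n : ℕ) :
    bandCount k (n + 1) = ∑ j ∈ range (min k (n + 1)), bandCount k (n - j) := by
  have hmaps : ∀ σ ∈ ({σ | InBand k σ} : Finset (Perm (Fin (n + 1)))),
      (σ.symm 0 : ℕ) ∈ range (min k (n + 1)) := by
    intro σ hσ
    have hk := ((mem_filter.1 hσ).2 (σ.symm 0)).2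
    rw [apply_symm_apply, Fin.val_zero] at hk
    rw [mem_range, lt_min_iff]
    exact ⟨by omega, (σ.symm 0).isLt⟩
  rw [bandCount, card_eq_sum_card_fiberwise hmaps]
  refine sum_congr rfl fun j hj => ?_
  rw [mem_range, lt_min_iff] at hj
  rw [filter_filter]
  exact card_inBand_symm_zero (by omega) hj.1

section KBonacci

variable {M : Type*}

def IsKBonacci [AddCommMonoid M] (k : ℕ) (u : ℕ → M) : Prop :=
  ∀ n, u (n + 1) = ∑ j ∈ range (min k (n + 1)), u (n - j)

lemma IsKBonacci.unique [AddCommMonoid M] {k : ℕ} {u v : ℕ → M}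
    (hu : IsKBonacci k u) (hv : IsKBonacci k v) (h0 : u 0 = v 0) : u = v := by
  funext n
  induction n using Nat.strong_induction_on with
  | _ n ih =>
    cases n with
    | zero => exact h0
    | succ n =>
      rw [hu, hv]
      exact sum_congr rfl fun j _ => ih _ (by omega)

lemma isKBonacci_bandCount [AddCommMonoidWithOne M] (k : ℕ) :
    IsKBonacci k (fun n => (bandCount k n : M)) := fun n => by
  simp only [bandCount_succ, Nat.cast_sum]

lemma isKBonacci_genFib [AddCommMonoid M] {k : ℕ} (hk : 1 ≤ k) (f : ℤ → M)
    (hf0 : ∀ n : ℤ, 1 ≤ n → n ≤ (k : ℤ) - 2 → f n = 0) (hfk : f k = f (k - 1))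
    (hfrec : ∀ n : ℤ, (k : ℤ) < n → f n = ∑ j ∈ Finset.Icc (1 : ℤ) (k : ℤ), f (n - j)) :
    IsKBonacci k (fun n : ℕ => f (k + n - 1)) := by
  intro n
  rcases n.eq_zero_or_pos with rfl | hn
  · simpa [min_eq_right hk] using hfk
  have hrec := hfrec (k + n) (by omega)
  rw [Int.Icc_eq_finset_map, sum_map] at hrec
  simp only [add_sub_cancel_right, Int.toNat_natCast, Function.Embedding.trans_apply,
    Nat.castEmbedding_apply, addLeftEmbedding_apply] at hrec
  calc f (k + (n + 1 : ℕ) - 1) = f (k + n) := by push_cast; ring_nf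
    _ = ∑ j ∈ range k, f (k + n - (1 + j)) := hrec
    _ = ∑ j ∈ range (min k (n + 1)), f (k + n - (1 + j)) := by
      refine (sum_subset (range_subset_range.2 (min_le_left _ _)) fun j hjk hjn => ?_).symm
      rw [mem_range] at hjk
      rw [mem_range, lt_min_iff] at hjn
      exact hf0 _ (by omega) (by omega)
    _ = ∑ j ∈ range (min k (n + 1)), f (k + (n - j : ℕ) - 1) := by
      refine sum_congr rfl fun j hj => ?_
      rw [mem_range, lt_min_iff] at hj
      congr 1
      omega

end KBonacci

theorem per_D_eq_genFib_general (k : ℕ) (hk : 2 ≤ k)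
    (f : ℤ → ℂ) (hf0 : ∀ n : ℤ, 1 ≤ n → n ≤ (k : ℤ) - 2 → f n = 0)
    (hfk1 : f ((k : ℤ) - 1) = 1) (hfk : f (k : ℤ) = 1)
    (hfrec : ∀ n : ℤ, (k : ℤ) < n → f n = ∑ j ∈ Finset.Icc (1 : ℤ) (k : ℤ), f (n - j))
    (n : ℕ) :
    perH n (dEntry k) = f ((k : ℤ) + n - 1) := by
  have hcount : (fun n => (bandCount k n : ℂ)) = fun n : ℕ => f (k + n - 1) :=
    (isKBonacci_bandCount k).unique (isKBonacci_genFib (by omega) f hf0 (hfk.trans hfk1.symm) hfrec)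
      (by simp [bandCount_zero, hfk1])
  rw [perH_dEntry, congrFun hcount n]

theorem per_D_eq_genFib (k : ℕ) (hk : 2 ≤ k)
    (f : ℤ → ℂ) (hf0 : ∀ n : ℤ, 1 ≤ n → n ≤ (k : ℤ) - 2 → f n = 0)
    (hfk1 : f ((k : ℤ) - 1) = 1) (hfk : f (k : ℤ) = 1)
    (hfrec : ∀ n : ℤ, (k : ℤ) < n → f n = ∑ j ∈ Finset.Icc (1 : ℤ) (k : ℤ), f (n - j))
    (n : ℕ) (hn : 1 ≤ n) :
    perH n (dEntry k) = f ((k : ℤ) + n - 1) :=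
  per_D_eq_genFib_general k hk f hf0 hfk1 hfk hfrec n
end

section
/- Let k ≥ 2 be an integer, c_1, …, c_k complex numbers with c_2 ≠ 0, and n ≥ 1. If H_{k,n} and L_{k,n} are formed with t_j = c_j for 1 ≤ j ≤ k, then per(H_{k,n}) = f^1_{k,n} and per(L_{k,n}) = f^1_{k,n}. -/
open Finset

/-- Entry (i,j) (1-based) of the matrix `L_{k,n}`:
`t_{i-j+1} / t_2^{i-j}` if `-1 ≤ i-j < k`, and `0` otherwise. -/
noncomputable def lEntry (k : ℕ) (t : ℤ → ℂ) (i j : ℕ) : ℂ :=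
  if -1 ≤ (i : ℤ) - j ∧ (i : ℤ) - j < k then
    t ((i : ℤ) - j + 1) / t 2 ^ ((i : ℤ) - j)
  else 0

/-! Both matrices are lower Hessenberg: `a r s = 0` for `s > r + 1`. In a permutation that
contributes to the permanent of such a matrix, the cycle through the last index `n` is forced to
be `s → s+1 → ⋯ → n → s`, and removing it leaves an arbitrary permutation of the first `s`
indices. Hence `per A_{n+1} = ∑ₛ a_{n+1,s+1} · a_{s+1,s+2} ⋯ a_{n,n+1} · per A_s`.
For `L` the superdiagonal is constantly `t₂`, so a block of length `d + 1` has weight `t_{d+1}`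
(and `0` once `d ≥ k`): this is the recurrence of `f¹`. Finally `H = D L D⁻¹` with
`D = diag(iʳ)`, and conjugation by an invertible diagonal matrix preserves the permanent. -/

open Equiv

namespace Fin

variable {n : ℕ}

noncomputable def extendWithCycle (s : Fin (n + 1)) (τ : Perm (Fin s)) : Perm (Fin (n + 1)) :=
  cycleIcc s (last n) * τ.viaFintypeEmbedding (castLEEmb s.isLt.le)

theorem val_extendWithCycle (s : Fin (n + 1)) (τ : Perm (Fin s)) (i : Fin (n + 1)) :
    (extendWithCycle s τ i : ℕ) =
      if h : (i : ℕ) < s then (τ ⟨i, h⟩ : ℕ) else if (i : ℕ) < n then i + 1 else s := by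
  rw [extendWithCycle, Perm.mul_apply]
  split_ifs with his hin
  · have hτ : τ.viaFintypeEmbedding (castLEEmb s.isLt.le) i = castLE s.isLt.le (τ ⟨i, his⟩) :=
      Perm.viaFintypeEmbedding_apply_image τ _ ⟨i, his⟩
    rw [hτ, cycleIcc_of_lt (τ ⟨i, his⟩).isLt, val_castLE]
  all_goals
    rw [Perm.viaFintypeEmbedding_apply_notMem_range _ _ fun ⟨j, hj⟩ => his (hj ▸ j.isLt)]
  · rw [cycleIcc_of_ge_of_lt (Fin.not_lt.mp his) (Fin.lt_def.mpr hin),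
      val_add_one_of_lt' (by simpa using hin)]
  · rw [show i = last n from Fin.ext (by rw [val_last]; omega),
      cycleIcc_of_last (le_last s)]

theorem extendWithCycle_last (s : Fin (n + 1)) (τ : Perm (Fin s)) :
    extendWithCycle s τ (last n) = s := by
  ext
  rw [val_extendWithCycle, val_last, dif_neg (not_lt.mpr s.is_le), if_neg (lt_irrefl n)]

theorem extendWithCycle_castLE (s : Fin (n + 1)) (τ : Perm (Fin s)) (j : Fin s) :
    extendWithCycle s τ (castLE s.isLt.le j) = castLE s.isLt.le (τ j) := by
  ext
  rw [val_extendWithCycle, dif_pos (by simp)]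
  rfl

theorem extendWithCycle_injective :
    Function.Injective fun p : Σ s : Fin (n + 1), Perm (Fin s) => extendWithCycle p.1 p.2 := by
  rintro ⟨s, τ⟩ ⟨s', τ'⟩ h
  have hs : s = s' := by
    simpa only [extendWithCycle_last] using congrArg (· (last n)) h
  subst hs
  congr
  refine Equiv.ext fun j => ?_
  simpa only [extendWithCycle_castLE, castLE_inj] using congrArg (· (castLE s.isLt.le j)) h

theorem val_apply_eq_succ_of_apply_last_le {σ : Perm (Fin (n + 1))} (hσ : ∀ i, (σ i : ℕ) ≤ i + 1)
    {i : Fin (n + 1)} (hsi : σ (last n) ≤ i) (hi : i < last n) : (σ i : ℕ) = i + 1 := by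
  -- `σ⁻¹` maps `(i, n]` injectively into `[i, n)`, hence onto it; so `σ i ∈ (i, n]`.
  have hsub : (Ioi i).map σ.symm.toEmbedding ⊆ Ico i (last n) := by
    intro m hm
    rw [mem_map_equiv, Equiv.symm_symm, mem_Ioi] at hm
    have hne : m ≠ last n := by
      rintro rfl
      exact not_lt.mpr hsi hm
    have := hσ m
    rw [lt_def] at hm
    exact mem_Ico.mpr ⟨le_def.mpr (by omega), lt_of_le_of_ne (le_last m) hne⟩
  have hcard : #(Ico i (last n)) ≤ #((Ioi i).map σ.symm.toEmbedding) := by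
    rw [card_map, card_Ioi, card_Ico, val_last]
    omega
  have hi' := eq_of_subset_of_card_le hsub hcard ▸ mem_Ico.mpr ⟨le_rfl, hi⟩
  rw [mem_map_equiv, Equiv.symm_symm, mem_Ioi, lt_def] at hi'
  exact le_antisymm (hσ i) hi'

theorem exists_extendWithCycle_eq {σ : Perm (Fin (n + 1))} (hσ : ∀ i, (σ i : ℕ) ≤ i + 1) :
    ∃ τ : Perm (Fin (σ (last n))), extendWithCycle (σ (last n)) τ = σ := by
  set s := σ (last n)
  have hlt : ∀ j : Fin s, (σ (castLE s.isLt.le j) : ℕ) < s := by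
    intro j
    refine lt_of_le_of_ne (le_trans (hσ _) j.isLt) fun h => ?_
    have := congrArg Fin.val (σ.injective (Fin.ext h : σ (castLE s.isLt.le j) = s))
    simp only [val_castLE, val_last] at this
    omega
  have hinj : Function.Injective fun j : Fin s => (⟨σ (castLE s.isLt.le j), hlt j⟩ : Fin s) := by
    intro x y h
    simp only [Fin.mk.injEq] at h
    exact castLE_injective _ (σ.injective (Fin.ext h))
  refine ⟨Equiv.ofBijective _ (Finite.injective_iff_bijective.mp hinj), ?_⟩
  ext i
  rw [val_extendWithCycle]
  split_ifs with his hin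
  · rfl
  · exact (val_apply_eq_succ_of_apply_last_le hσ (Fin.not_lt.mp his) (lt_def.mpr hin)).symm
  · rw [show i = last n from Fin.ext (by rw [val_last]; omega)]

theorem prod_extendWithCycle {M : Type*} [CommMonoid M] (f : ℕ → ℕ → M) (s : Fin (n + 1))
    (τ : Perm (Fin s)) :
    ∏ i : Fin (n + 1), f i (extendWithCycle s τ i) =
      f n s * (∏ i ∈ Ico (s : ℕ) n, f i (i + 1)) * ∏ j : Fin s, f j (τ j) := by
  set e : ℕ → ℕ := fun i => if h : i < s then (τ ⟨i, h⟩ : ℕ) else if i < n then i + 1 else s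
  have hlow : ∏ i ∈ range s, f i (e i) = ∏ j : Fin s, f j (τ j) :=
    (prod_range _).trans (prod_congr rfl fun j _ => by simp [e, j.isLt])
  have hmid : ∏ i ∈ Ico (s : ℕ) n, f i (e i) = ∏ i ∈ Ico (s : ℕ) n, f i (i + 1) :=
    prod_congr rfl fun i hi => by
      obtain ⟨hsi, hin⟩ := mem_Ico.mp hi
      simp [e, hin, not_lt.mpr hsi]
  calc ∏ i : Fin (n + 1), f i (extendWithCycle s τ i) = ∏ i ∈ range (n + 1), f i (e i) := by
        simp_rw [val_extendWithCycle]
        exact prod_range (fun i => f i (e i)) |>.symm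
    _ = (∏ i ∈ range s, f i (e i)) * (∏ i ∈ Ico (s : ℕ) n, f i (e i)) * f n (e n) := by
        rw [prod_range_succ, prod_range_mul_prod_Ico _ s.is_le]
    _ = _ := by
        rw [hlow, hmid, show e n = s by simp [e, s.is_le]]
        ac_rfl

end Fin

theorem succ_eq_sum_range_of_linearRecurrence {R : Type*} [Semiring R] (k : ℕ) (c f : ℤ → R)
    (hneg : ∀ n : ℤ, 1 - (k : ℤ) ≤ n → n < 0 → f n = 0)
    (hrec : ∀ n : ℤ, 0 < n → f n = ∑ j ∈ Icc (1 : ℤ) k, c j * f (n - j)) (n : ℕ) :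
    f (n + 1 : ℕ) = ∑ s ∈ range (n + 1), (if n - s < k then c ((n - s : ℕ) + 1) else 0) * f s := by
  have hlow : ∀ j ∈ Icc (1 : ℤ) k, c j * f (n + 1 - j) ≠ 0 → j ≤ n + 1 := by
    intro j hj hne
    by_contra! hlt
    rw [mem_Icc] at hj
    exact hne (by rw [hneg _ (by omega) (by omega), mul_zero])
  rw [Nat.cast_succ, hrec _ (by positivity), ← sum_filter_of_ne hlow]
  simp_rw [ite_mul, zero_mul]
  rw [← sum_filter]
  refine sum_nbij' (fun j => (n + 1 - j).toNat) (fun s => n + 1 - s) ?_ ?_ ?_ ?_ ?_ <;>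
    intro x hx <;> simp only [mem_filter, mem_Icc, mem_range] at hx ⊢
  · omega
  · omega
  · omega
  · omega
  · congr 2 <;> omega

theorem eq_of_succ_eq_sum_range {R : Type*} [Semiring R] (w u v : ℕ → R) (h0 : u 0 = v 0)
    (hu : ∀ n, u (n + 1) = ∑ s ∈ range (n + 1), w (n - s) * u s)
    (hv : ∀ n, v (n + 1) = ∑ s ∈ range (n + 1), w (n - s) * v s) : u = v := by
  ext m
  induction m using Nat.strong_induction_on with
  | _ m ih =>
    cases m with
    | zero => exact h0
    | succ n =>
      rw [hu, hv]
      exact sum_congr rfl fun s hs => by rw [ih s (by simpa [Nat.lt_succ_iff] using hs)]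

theorem perH_succ_of_hessenberg (a : ℕ → ℕ → ℂ) (ha : ∀ r s, r + 1 < s → a r s = 0) (n : ℕ) :
    perH (n + 1) a = ∑ s ∈ range (n + 1),
      a (n + 1) (s + 1) * (∏ i ∈ Ico s n, a (i + 1) (i + 2)) * perH s a := by
  have hvanish : ∀ σ : Perm (Fin (n + 1)),
      σ ∉ Set.range (fun p : Σ s : Fin (n + 1), Perm (Fin s) => Fin.extendWithCycle p.1 p.2) →
      ∏ i : Fin (n + 1), a (i + 1) (σ i + 1) = 0 := by
    intro σ hσ
    obtain ⟨i, hi⟩ : ∃ i : Fin (n + 1), (i : ℕ) + 1 < σ i := by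
      by_contra! h
      obtain ⟨τ, hτ⟩ := Fin.exists_extendWithCycle_eq h
      exact hσ ⟨⟨_, τ⟩, hτ⟩
    exact prod_eq_zero (mem_univ i) (ha _ _ (by omega))
  calc perH (n + 1) a
      = ∑ p : Σ s : Fin (n + 1), Perm (Fin s),
          ∏ i : Fin (n + 1), a (i + 1) (Fin.extendWithCycle p.1 p.2 i + 1) :=
        (sum_of_injOn _ Fin.extendWithCycle_injective.injOn (fun _ _ => mem_coe.mpr (mem_univ _))
          (fun σ _ hσ => hvanish σ (by simpa using hσ)) (fun _ _ => rfl)).symm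
    _ = ∑ s : Fin (n + 1),
          a (n + 1) (s + 1) * (∏ i ∈ Ico (s : ℕ) n, a (i + 1) (i + 2)) * perH s a := by
        rw [Fintype.sum_sigma]
        refine sum_congr rfl fun s _ => ?_
        rw [perH, mul_sum]
        exact sum_congr rfl fun τ _ =>
          Fin.prod_extendWithCycle (fun i j => a (i + 1) (j + 1)) s τ
    _ = _ := Fin.sum_univ_eq_sum_range
          (fun s => a (n + 1) (s + 1) * (∏ i ∈ Ico s n, a (i + 1) (i + 2)) * perH s a) (n + 1)

theorem perH_diagonal_conj (a : ℕ → ℕ → ℂ) (u : ℕ → ℂ) (hu : ∀ i, u i ≠ 0) (n : ℕ) :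
    perH n (fun r s => u r * a r s / u s) = perH n a := by
  refine sum_congr rfl fun σ _ => ?_
  have hperm : ∏ i : Fin n, u ((σ i : ℕ) + 1) = ∏ i : Fin n, u (i + 1) :=
    Equiv.prod_comp σ fun i : Fin n => u (i + 1)
  rw [prod_div_distrib, prod_mul_distrib, hperm, mul_div_right_comm,
    div_self (prod_ne_zero_iff.mpr fun i _ => hu _), one_mul]

section lEntry

variable (k : ℕ) (t : ℤ → ℂ)

theorem lEntry_eq_zero_of_lt {r s : ℕ} (h : r + 1 < s) : lEntry k t r s = 0 :=
  if_neg fun h' => by omega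

theorem lEntry_superdiagonal (ht0 : t 0 = 1) (i : ℕ) : lEntry k t (i + 1) (i + 2) = t 2 := by
  have hd : ((i + 1 : ℕ) : ℤ) - ((i + 2 : ℕ) : ℤ) = -1 := by push_cast; ring
  rw [lEntry, hd, if_pos ⟨le_rfl, by omega⟩]
  norm_num [ht0]

theorem lEntry_succ_succ_mul_pow (ht2 : t 2 ≠ 0) {n s : ℕ} (hs : s ≤ n) :
    lEntry k t (n + 1) (s + 1) * t 2 ^ (n - s) =
      if n - s < k then t ((n - s : ℕ) + 1) else 0 := by
  have hd : ((n + 1 : ℕ) : ℤ) - ((s + 1 : ℕ) : ℤ) = ((n - s : ℕ) : ℤ) := by push_cast; omega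
  rw [lEntry, hd, zpow_natCast]
  by_cases h : n - s < k
  · rw [if_pos ⟨by omega, by exact_mod_cast h⟩, if_pos h, div_mul_cancel₀ _ (pow_ne_zero _ ht2)]
  · rw [if_neg fun h' => h (by exact_mod_cast h'.2), if_neg h, zero_mul]

theorem perH_lEntry_succ (ht0 : t 0 = 1) (ht2 : t 2 ≠ 0) (n : ℕ) :
    perH (n + 1) (lEntry k t) =
      ∑ s ∈ range (n + 1), (if n - s < k then t ((n - s : ℕ) + 1) else 0) * perH s (lEntry k t) := by
  rw [perH_succ_of_hessenberg _ fun _ _ => lEntry_eq_zero_of_lt k t]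
  refine sum_congr rfl fun s hs => ?_
  rw [prod_congr rfl fun i _ => lEntry_superdiagonal k t ht0 i, prod_const, Nat.card_Ico,
    lEntry_succ_succ_mul_pow k t ht2 (Nat.lt_succ_iff.mp (mem_range.mp hs))]

end lEntry

theorem hEntry_eq_diagonal_conj (k : ℕ) (t : ℤ → ℂ) :
    hEntry k t = fun r s => Complex.I ^ r * lEntry k t r s / Complex.I ^ s := by
  ext r s
  rw [hEntry, lEntry]
  split_ifs
  · rw [zpow_sub₀ Complex.I_ne_zero, zpow_natCast, zpow_natCast]
    ring
  · simp

theorem per_HL_eq_kSOkF_general (k : ℕ) (hk : 2 ≤ k) (c : ℤ → ℂ) (hc2 : c 2 ≠ 0)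
    (t : ℤ → ℂ) (ht0 : t 0 = 1) (htc : ∀ j : ℤ, 1 ≤ j → j ≤ (k : ℤ) → t j = c j)
    (f₁ : ℤ → ℂ) (hf₁zero : f₁ 0 = 1)
    (hf₁neg : ∀ n : ℤ, 1 - (k : ℤ) ≤ n → n < 0 → f₁ n = 0)
    (hf₁rec : ∀ n : ℤ, 0 < n →
      f₁ n = ∑ j ∈ Finset.Icc (1 : ℤ) (k : ℤ), c j * f₁ (n - j))
    (n : ℕ) :
    perH n (hEntry k t) = f₁ (n : ℤ) ∧ perH n (lEntry k t) = f₁ (n : ℤ) := by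
  have ht2 : t 2 ≠ 0 := htc 2 (by norm_num) (by exact_mod_cast hk) ▸ hc2
  have hweight : ∀ d : ℕ, (if d < k then t (d + 1) else 0) = if d < k then c (d + 1) else 0 :=
    fun d => by split_ifs with h; exacts [htc _ (by omega) (by omega), rfl]
  have hL : (fun m : ℕ => perH m (lEntry k t)) = fun m : ℕ => f₁ m :=
    eq_of_succ_eq_sum_range (fun d => if d < k then c (d + 1) else 0) _ _ (by simp [perH, hf₁zero])
      (fun m => by simp_rw [perH_lEntry_succ k t ht0 ht2, hweight])
      (succ_eq_sum_range_of_linearRecurrence k c f₁ hf₁neg hf₁rec)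
  have hH : perH n (hEntry k t) = perH n (lEntry k t) := by
    rw [hEntry_eq_diagonal_conj, perH_diagonal_conj _ _ fun i => pow_ne_zero i Complex.I_ne_zero]
  rw [hH, and_self]
  exact congrFun hL n

theorem per_HL_eq_kSOkF (k : ℕ) (hk : 2 ≤ k) (c : ℤ → ℂ) (hc2 : c 2 ≠ 0)
    (t : ℤ → ℂ) (ht0 : t 0 = 1) (htc : ∀ j : ℤ, 1 ≤ j → j ≤ (k : ℤ) → t j = c j)
    (f₁ : ℤ → ℂ) (hf₁zero : f₁ 0 = 1)
    (hf₁neg : ∀ n : ℤ, 1 - (k : ℤ) ≤ n → n < 0 → f₁ n = 0)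
    (hf₁rec : ∀ n : ℤ, 0 < n →
      f₁ n = ∑ j ∈ Finset.Icc (1 : ℤ) (k : ℤ), c j * f₁ (n - j))
    (n : ℕ) (hn : 1 ≤ n) :
    perH n (hEntry k t) = f₁ (n : ℤ) ∧ perH n (lEntry k t) = f₁ (n : ℤ) :=
  per_HL_eq_kSOkF_general k hk c hc2 t ht0 htc f₁ hf₁zero hf₁neg hf₁rec n
end
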